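/- arXiv:2505.20786 — 3 statements merged into one kernel-verified Lean document; each statement's English description precedes it below -/
import Mathlib

section
/- Let β₁, β₃ : ℝ × ℝ → ℂ be smooth functions of (ξ,t) with β₁,t = i·β₁,ξξ and β₃,t = −i·β₃,ξξ, and let β₂, β₄ : ℝ × ℝ → ℂ be smooth functions of (η,t) with β₂,t = i·β₂,ηη and β₄,t = −i·β₄,ηη. Assume the Wronskian boundary condition: for all t ∈ ℝ, (β₁,ξ·β₃ − β₁·β₃,ξ)(0,t) + (β₂,η·β₄ − β₂·β₄,η)(0,t) = 0. Let C ∈ ℂ be a constant and define R(ξ,η,t) := ∫₀^ξ β₁(ζ,t)β₃(ζ,t)dζ + ∫₀^η β₂(ν,t)β₄(ν,t)dν + C, and assume R(ξ,η,t) ≠ 0 for all (ξ,η,t). Define q̂₁ := −β₁β₂/R, q̂₂ := −4β₃β₄/R, g₁ := 2·∂(β₂β₄)/∂η / R − 2·(β₂β₄)²/R², g₂ := 2·∂(β₁β₃)/∂ξ / R − 2·(β₁β₃)²/R². Then (q̂₁, q̂₂, g₁, g₂) solves the coupled system: i·q̂₁,t + q̂₁,ξξ + q̂₁,ηη + q̂₁·(g₁+g₂)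 = 0, −i·q̂₂,t + q̂₂,ξξ + q̂₂,ηη + q̂₂·(g₁+g₂) = 0, ∂g₁/∂ξ = −(1/2)·∂(q̂₁q̂₂)/∂η, and ∂g₂/∂η = −(1/2)·∂(q̂₁q̂₂)/∂ξ. -/
open intervalIntegral

/-- Partial derivative in the first (ξ) variable of a function `ℝ × ℝ × ℝ → ℂ`
of `(ξ, η, t)`. -/
noncomputable def pdXi (f : ℝ × ℝ × ℝ → ℂ) (p : ℝ × ℝ × ℝ) : ℂ :=
  deriv (fun s => f (s, p.2.1, p.2.2)) p.1

/-- Partial derivative in the second (η) variable. -/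
noncomputable def pdEta (f : ℝ × ℝ × ℝ → ℂ) (p : ℝ × ℝ × ℝ) : ℂ :=
  deriv (fun s => f (p.1, s, p.2.2)) p.2.1

/-- Partial derivative in the third (t) variable. -/
noncomputable def pdT (f : ℝ × ℝ × ℝ → ℂ) (p : ℝ × ℝ × ℝ) : ℂ :=
  deriv (fun s => f (p.1, p.2.1, s)) p.2.2

/-- Partial derivative in the first variable of a function `ℝ × ℝ → ℂ`. -/
noncomputable def pd1 (f : ℝ × ℝ → ℂ) (p : ℝ × ℝ) : ℂ :=
  deriv (fun s => f (s, p.2)) p.1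

open MeasureTheory

lemma hasDerivAt_pd1 {f : ℝ × ℝ → ℂ} (hf : ContDiff ℝ (⊤ : ℕ∞) f) (x t : ℝ) :
    HasDerivAt (fun s => f (s, t)) (pd1 f (x, t)) x := by
  have h : DifferentiableAt ℝ (fun s => f (s, t)) x :=
    (hf.differentiable (by simp) (x, t)).comp x
      (DifferentiableAt.prodMk differentiableAt_id (differentiableAt_const t))
  exact h.hasDerivAt

lemma contDiff_pd1 {f : ℝ × ℝ → ℂ} (hf : ContDiff ℝ (⊤ : ℕ∞) f) :
    ContDiff ℝ (⊤ : ℕ∞) (pd1 f) := by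
  have h : pd1 f = fun p : ℝ × ℝ => fderiv ℝ f p (1, 0) := by
    funext p
    have h2 : HasDerivAt (fun s : ℝ => (s, p.2)) ((1 : ℝ), (0 : ℝ)) p.1 :=
      HasDerivAt.prodMk (hasDerivAt_id p.1) (hasDerivAt_const p.1 p.2)
    have h3 := ((hf.differentiable (by simp) p).hasFDerivAt).comp_hasDerivAt p.1
      (by simpa using h2)
    exact h3.deriv
  rw [h]
  exact (hf.fderiv_right (by exact_mod_cast le_top)).clm_apply contDiff_const

lemma pd1_const_mul {f : ℝ × ℝ → ℂ} (hf : ContDiff ℝ (⊤ : ℕ∞) f) (c : ℂ) (p : ℝ × ℝ) :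
    pd1 (fun z => c * f z) p = c * pd1 f p := by
  show deriv (fun s => c * f (s, p.2)) p.1 = _
  rw [deriv_const_mul c ((hasDerivAt_pd1 hf p.1 p.2).differentiableAt)]
  rfl

lemma pd1_pd1_const_mul {f : ℝ × ℝ → ℂ} (hf : ContDiff ℝ (⊤ : ℕ∞) f) (c : ℂ) (p : ℝ × ℝ) :
    pd1 (pd1 (fun z => c * f z)) p = c * pd1 (pd1 f) p := by
  have e : (pd1 (fun z => c * f z)) = fun z => c * pd1 f z :=
    funext fun z => pd1_const_mul hf c z
  rw [e, pd1_const_mul (contDiff_pd1 hf) c]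

lemma hasDerivAt_param_integral {F F' : ℝ → ℝ → ℂ} {a b x₀ : ℝ}
    (hF : Continuous fun p : ℝ × ℝ => F p.1 p.2)
    (hF' : Continuous fun p : ℝ × ℝ => F' p.1 p.2)
    (hd : ∀ x t, HasDerivAt (fun y => F y t) (F' x t) x) :
    HasDerivAt (fun x => ∫ t in a..b, F x t) (∫ t in a..b, F' x₀ t) x₀ := by
  obtain ⟨M, hM⟩ := ((isCompact_closedBall x₀ 1).prod isCompact_uIcc).exists_bound_of_continuousOn
    (hF'.continuousOn (s := Metric.closedBall x₀ 1 ×ˢ Set.uIcc a b))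
  refine (intervalIntegral.hasDerivAt_integral_of_dominated_loc_of_deriv_le
    (F := F) (F' := F') (bound := fun _ => M) (Metric.ball_mem_nhds x₀ one_pos) ?_ ?_ ?_ ?_ ?_ ?_).2
  · exact Filter.Eventually.of_forall fun x =>
      ((hF.comp (continuous_const.prodMk continuous_id)).aestronglyMeasurable).restrict
  · exact (hF.comp (continuous_const.prodMk continuous_id)).intervalIntegrable _ _
  · exact ((hF'.comp (continuous_const.prodMk continuous_id)).aestronglyMeasurable).restrict
  · refine Filter.Eventually.of_forall fun t ht x hx => hM (x, t) ?_
    exact Set.mk_mem_prod (Metric.ball_subset_closedBall hx) (Set.uIoc_subset_uIcc ht)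
  · exact intervalIntegrable_const
  · exact Filter.Eventually.of_forall fun t _ x _ => hd x t

/-- Generic form of the first two equations of the coupled system. -/
lemma main_eq (u v φ ψ : ℝ × ℝ → ℂ)
    (hu : ContDiff ℝ (⊤ : ℕ∞) u) (hv : ContDiff ℝ (⊤ : ℕ∞) v)
    (hφ : ContDiff ℝ (⊤ : ℕ∞) φ) (hψ : ContDiff ℝ (⊤ : ℕ∞) ψ)
    (ι : ℂ) (hι : ι * ι = -1)
    (hut : ∀ x t : ℝ, HasDerivAt (fun s => u (x, s)) (ι * pd1 (pd1 u) (x, t)) t)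
    (hvt : ∀ y t : ℝ, HasDerivAt (fun s => v (y, s)) (ι * pd1 (pd1 v) (y, t)) t)
    (R : ℝ × ℝ × ℝ → ℂ) (hRne : ∀ p, R p ≠ 0)
    (hRξ : ∀ x y t : ℝ, HasDerivAt (fun s => R (s, y, t)) (u (x, t) * φ (x, t)) x)
    (hRη : ∀ x y t : ℝ, HasDerivAt (fun s => R (x, s, t)) (v (y, t) * ψ (y, t)) y)
    (hRt : ∀ x y t : ℝ, HasDerivAt (fun s => R (x, y, s))
      (ι * ((pd1 u (x, t) * φ (x, t) - u (x, t) * pd1 φ (x, t))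
          + (pd1 v (y, t) * ψ (y, t) - v (y, t) * pd1 ψ (y, t)))) t)
    (q g₁ g₂ : ℝ × ℝ × ℝ → ℂ)
    (hq : ∀ p : ℝ × ℝ × ℝ, q p = -(u (p.1, p.2.2) * v (p.2.1, p.2.2)) / R p)
    (hg₁ : ∀ p : ℝ × ℝ × ℝ, g₁ p =
      2 * deriv (fun s => v (s, p.2.2) * ψ (s, p.2.2)) p.2.1 / R p
        - 2 * (v (p.2.1, p.2.2) * ψ (p.2.1, p.2.2)) ^ 2 / (R p) ^ 2)
    (hg₂ : ∀ p : ℝ × ℝ × ℝ, g₂ p =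
      2 * deriv (fun s => u (s, p.2.2) * φ (s, p.2.2)) p.1 / R p
        - 2 * (u (p.1, p.2.2) * φ (p.1, p.2.2)) ^ 2 / (R p) ^ 2) :
    ∀ p, ι * pdT q p + pdXi (pdXi q) p + pdEta (pdEta q) p + q p * (g₁ p + g₂ p) = 0 := by
  have Du := hasDerivAt_pd1 hu
  have Dv := hasDerivAt_pd1 hv
  have Dφ := hasDerivAt_pd1 hφ
  have Dψ := hasDerivAt_pd1 hψ
  have Du1 := hasDerivAt_pd1 (contDiff_pd1 hu)
  have Dv1 := hasDerivAt_pd1 (contDiff_pd1 hv)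
  have hXi : ∀ x y t : ℝ, pdXi q (x, y, t) =
      (-(pd1 u (x, t) * v (y, t)) * R (x, y, t)
        + u (x, t) * v (y, t) * (u (x, t) * φ (x, t))) / R (x, y, t) ^ 2 := by
    intro x y t
    have hfun : (fun s => q (s, y, t)) =
        fun s => -(u (s, t) * v (y, t)) / R (s, y, t) := funext fun s => hq (s, y, t)
    have H : HasDerivAt (fun s => -(u (s, t) * v (y, t)) / R (s, y, t))
        ((-(pd1 u (x, t) * v (y, t)) * R (x, y, t)
          + u (x, t) * v (y, t) * (u (x, t) * φ (x, t))) / R (x, y, t) ^ 2) x := by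
      have := (((Du x t).mul_const (v (y, t))).fun_neg.div (hRξ x y t) (hRne (x, y, t)))
      exact this.congr_deriv (by ring)
    show deriv (fun s => q (s, y, t)) x = _
    rw [hfun]
    exact H.deriv
  have hEta : ∀ x y t : ℝ, pdEta q (x, y, t) =
      (-(u (x, t) * pd1 v (y, t)) * R (x, y, t)
        + u (x, t) * v (y, t) * (v (y, t) * ψ (y, t))) / R (x, y, t) ^ 2 := by
    intro x y t
    have hfun : (fun s => q (x, s, t)) =
        fun s => -(u (x, t) * v (s, t)) / R (x, s, t) := funext fun s => hq (x, s, t)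
    have H : HasDerivAt (fun s => -(u (x, t) * v (s, t)) / R (x, s, t))
        ((-(u (x, t) * pd1 v (y, t)) * R (x, y, t)
          + u (x, t) * v (y, t) * (v (y, t) * ψ (y, t))) / R (x, y, t) ^ 2) y := by
      have := (((Dv y t).const_mul (u (x, t))).fun_neg.div (hRη x y t) (hRne (x, y, t)))
      exact this.congr_deriv (by ring)
    show deriv (fun s => q (x, s, t)) y = _
    rw [hfun]
    exact H.deriv
  rintro ⟨x, y, t⟩
  have hXX : pdXi (pdXi q) (x, y, t) =
      (((-(pd1 (pd1 u) (x, t) * v (y, t)) * R (x, y, t)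
          + u (x, t) * v (y, t) * (pd1 u (x, t) * φ (x, t) + u (x, t) * pd1 φ (x, t)))
            * R (x, y, t) ^ 2
        - (-(pd1 u (x, t) * v (y, t)) * R (x, y, t)
          + u (x, t) * v (y, t) * (u (x, t) * φ (x, t)))
            * (2 * R (x, y, t) * (u (x, t) * φ (x, t))))) / (R (x, y, t) ^ 2) ^ 2 := by
    have hfun : (fun s => pdXi q (s, y, t)) =
        fun s => (-(pd1 u (s, t) * v (y, t)) * R (s, y, t)
          + u (s, t) * v (y, t) * (u (s, t) * φ (s, t))) / R (s, y, t) ^ 2 :=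
      funext fun s => hXi s y t
    have HN : HasDerivAt (fun s => -(pd1 u (s, t) * v (y, t)) * R (s, y, t)
          + u (s, t) * v (y, t) * (u (s, t) * φ (s, t)))
        (-(pd1 (pd1 u) (x, t) * v (y, t)) * R (x, y, t)
          + u (x, t) * v (y, t) * (pd1 u (x, t) * φ (x, t) + u (x, t) * pd1 φ (x, t))) x := by
      have h1 := (((Du1 x t).mul_const (v (y, t))).fun_neg.mul (hRξ x y t))
      have h2 := (((Du x t).mul_const (v (y, t))).mul ((Du x t).fun_mul (Dφ x t)))
      exact (h1.add h2).congr_deriv (by ring)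
    have HD : HasDerivAt (fun s => R (s, y, t) ^ 2)
        (2 * R (x, y, t) * (u (x, t) * φ (x, t))) x := by
      have h := (hRξ x y t).fun_mul (hRξ x y t)
      have e : (fun s => R (s, y, t) * R (s, y, t)) = fun s => R (s, y, t) ^ 2 :=
        funext fun s => (sq (R (s, y, t))).symm
      rw [e] at h
      exact h.congr_deriv (by ring)
    have H := HN.div HD (pow_ne_zero 2 (hRne (x, y, t)))
    show deriv (fun s => pdXi q (s, y, t)) x = _
    rw [hfun]
    exact H.deriv
  have hEE : pdEta (pdEta q) (x, y, t) =
      (((-(u (x, t) * pd1 (pd1 v) (y, t)) * R (x, y, t)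
          + u (x, t) * v (y, t) * (pd1 v (y, t) * ψ (y, t) + v (y, t) * pd1 ψ (y, t)))
            * R (x, y, t) ^ 2
        - (-(u (x, t) * pd1 v (y, t)) * R (x, y, t)
          + u (x, t) * v (y, t) * (v (y, t) * ψ (y, t)))
            * (2 * R (x, y, t) * (v (y, t) * ψ (y, t))))) / (R (x, y, t) ^ 2) ^ 2 := by
    have hfun : (fun s => pdEta q (x, s, t)) =
        fun s => (-(u (x, t) * pd1 v (s, t)) * R (x, s, t)
          + u (x, t) * v (s, t) * (v (s, t) * ψ (s, t))) / R (x, s, t) ^ 2 :=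
      funext fun s => hEta x s t
    have HN : HasDerivAt (fun s => -(u (x, t) * pd1 v (s, t)) * R (x, s, t)
          + u (x, t) * v (s, t) * (v (s, t) * ψ (s, t)))
        (-(u (x, t) * pd1 (pd1 v) (y, t)) * R (x, y, t)
          + u (x, t) * v (y, t) * (pd1 v (y, t) * ψ (y, t) + v (y, t) * pd1 ψ (y, t))) y := by
      have h1 := (((Dv1 y t).const_mul (u (x, t))).fun_neg.mul (hRη x y t))
      have h2 := (((Dv y t).const_mul (u (x, t))).mul ((Dv y t).fun_mul (Dψ y t)))
      exact (h1.add h2).congr_deriv (by ring)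
    have HD : HasDerivAt (fun s => R (x, s, t) ^ 2)
        (2 * R (x, y, t) * (v (y, t) * ψ (y, t))) y := by
      have h := (hRη x y t).fun_mul (hRη x y t)
      have e : (fun s => R (x, s, t) * R (x, s, t)) = fun s => R (x, s, t) ^ 2 :=
        funext fun s => (sq (R (x, s, t))).symm
      rw [e] at h
      exact h.congr_deriv (by ring)
    have H := HN.div HD (pow_ne_zero 2 (hRne (x, y, t)))
    show deriv (fun s => pdEta q (x, s, t)) y = _
    rw [hfun]
    exact H.deriv
  have hT : pdT q (x, y, t) =
      (-(ι * pd1 (pd1 u) (x, t) * v (y, t) + u (x, t) * (ι * pd1 (pd1 v) (y, t))) * R (x, y, t)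
        + u (x, t) * v (y, t) *
          (ι * ((pd1 u (x, t) * φ (x, t) - u (x, t) * pd1 φ (x, t))
            + (pd1 v (y, t) * ψ (y, t) - v (y, t) * pd1 ψ (y, t))))) / R (x, y, t) ^ 2 := by
    have hfun : (fun s => q (x, y, s)) =
        fun s => -(u (x, s) * v (y, s)) / R (x, y, s) := funext fun s => hq (x, y, s)
    have H : HasDerivAt (fun s => -(u (x, s) * v (y, s)) / R (x, y, s))
        ((-(ι * pd1 (pd1 u) (x, t) * v (y, t) + u (x, t) * (ι * pd1 (pd1 v) (y, t)))
            * R (x, y, t)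
          + u (x, t) * v (y, t) *
            (ι * ((pd1 u (x, t) * φ (x, t) - u (x, t) * pd1 φ (x, t))
              + (pd1 v (y, t) * ψ (y, t) - v (y, t) * pd1 ψ (y, t))))) / R (x, y, t) ^ 2) t := by
      have := (((hut x t).fun_mul (hvt y t)).fun_neg.div (hRt x y t) (hRne (x, y, t)))
      exact this.congr_deriv (by ring)
    show deriv (fun s => q (x, y, s)) t = _
    rw [hfun]
    exact H.deriv
  have hT2 : ι * pdT q (x, y, t) =
      ((pd1 (pd1 u) (x, t) * v (y, t) + u (x, t) * pd1 (pd1 v) (y, t)) * R (x, y, t)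
        - u (x, t) * v (y, t) *
          ((pd1 u (x, t) * φ (x, t) - u (x, t) * pd1 φ (x, t))
            + (pd1 v (y, t) * ψ (y, t) - v (y, t) * pd1 ψ (y, t)))) / R (x, y, t) ^ 2 := by
    rw [hT, ← mul_div_assoc]
    congr 1
    linear_combination (u (x, t) * v (y, t) *
        ((pd1 u (x, t) * φ (x, t) - u (x, t) * pd1 φ (x, t))
          + (pd1 v (y, t) * ψ (y, t) - v (y, t) * pd1 ψ (y, t)))
      - (pd1 (pd1 u) (x, t) * v (y, t) + u (x, t) * pd1 (pd1 v) (y, t)) * R (x, y, t)) * hι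
  have hGd : deriv (fun s => v (s, t) * ψ (s, t)) y
      = pd1 v (y, t) * ψ (y, t) + v (y, t) * pd1 ψ (y, t) := ((Dv y t).fun_mul (Dψ y t)).deriv
  have hFd : deriv (fun s => u (s, t) * φ (s, t)) x
      = pd1 u (x, t) * φ (x, t) + u (x, t) * pd1 φ (x, t) := ((Du x t).fun_mul (Dφ x t)).deriv
  have hg₁' := hg₁ (x, y, t)
  have hg₂' := hg₂ (x, y, t)
  simp only at hg₁' hg₂'
  rw [hT2, hXX, hEE, hq (x, y, t), hg₁', hg₂', hGd, hFd]
  have hr := hRne (x, y, t)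
  field_simp
  ring

/-- Solutions `β₁, β₂, β₃, β₄` of the heat equations with
imaginary time produce, via the explicit formulas, a solution of the coupled
system associated with the Davey–Stewartson I equation. -/
theorem coupled_system_solution
    (β₁ β₂ β₃ β₄ : ℝ × ℝ → ℂ)
    (hβ₁s : ContDiff ℝ (⊤ : ℕ∞) β₁) (hβ₂s : ContDiff ℝ (⊤ : ℕ∞) β₂)
    (hβ₃s : ContDiff ℝ (⊤ : ℕ∞) β₃) (hβ₄s : ContDiff ℝ (⊤ : ℕ∞) β₄)
    (hβ₁ : ∀ ξ t : ℝ, deriv (fun s => β₁ (ξ, s)) t =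
      Complex.I * deriv (fun s => pd1 β₁ (s, t)) ξ)
    (hβ₂ : ∀ η t : ℝ, deriv (fun s => β₂ (η, s)) t =
      Complex.I * deriv (fun s => pd1 β₂ (s, t)) η)
    (hβ₃ : ∀ ξ t : ℝ, deriv (fun s => β₃ (ξ, s)) t =
      -Complex.I * deriv (fun s => pd1 β₃ (s, t)) ξ)
    (hβ₄ : ∀ η t : ℝ, deriv (fun s => β₄ (η, s)) t =
      -Complex.I * deriv (fun s => pd1 β₄ (s, t)) η)
    (hWronskian : ∀ t : ℝ,
      (pd1 β₁ (0, t) * β₃ (0, t) - β₁ (0, t) * pd1 β₃ (0, t)) +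
      (pd1 β₂ (0, t) * β₄ (0, t) - β₂ (0, t) * pd1 β₄ (0, t)) = 0)
    (C : ℂ)
    (R : ℝ × ℝ × ℝ → ℂ)
    (hR : ∀ p : ℝ × ℝ × ℝ, R p =
      (∫ ζ in (0:ℝ)..p.1, β₁ (ζ, p.2.2) * β₃ (ζ, p.2.2)) +
      (∫ ν in (0:ℝ)..p.2.1, β₂ (ν, p.2.2) * β₄ (ν, p.2.2)) + C)
    (hRne : ∀ p, R p ≠ 0)
    (Qh₁ Qh₂ g₁ g₂ : ℝ × ℝ × ℝ → ℂ)
    (hQh₁ : ∀ p : ℝ × ℝ × ℝ, Qh₁ p = -(β₁ (p.1, p.2.2) * β₂ (p.2.1, p.2.2)) / R p)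
    (hQh₂ : ∀ p : ℝ × ℝ × ℝ, Qh₂ p = -(4 * β₃ (p.1, p.2.2) * β₄ (p.2.1, p.2.2)) / R p)
    (hg₁ : ∀ p : ℝ × ℝ × ℝ, g₁ p =
      2 * deriv (fun s => β₂ (s, p.2.2) * β₄ (s, p.2.2)) p.2.1 / R p
        - 2 * (β₂ (p.2.1, p.2.2) * β₄ (p.2.1, p.2.2)) ^ 2 / (R p) ^ 2)
    (hg₂ : ∀ p : ℝ × ℝ × ℝ, g₂ p =
      2 * deriv (fun s => β₁ (s, p.2.2) * β₃ (s, p.2.2)) p.1 / R p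
        - 2 * (β₁ (p.1, p.2.2) * β₃ (p.1, p.2.2)) ^ 2 / (R p) ^ 2) :
    (∀ p, Complex.I * pdT Qh₁ p + pdXi (pdXi Qh₁) p + pdEta (pdEta Qh₁) p
        + Qh₁ p * (g₁ p + g₂ p) = 0) ∧
    (∀ p, -Complex.I * pdT Qh₂ p + pdXi (pdXi Qh₂) p + pdEta (pdEta Qh₂) p
        + Qh₂ p * (g₁ p + g₂ p) = 0) ∧
    (∀ p, pdXi g₁ p = -(1 / 2) * pdEta (fun s => Qh₁ s * Qh₂ s) p) ∧
    (∀ p, pdEta g₂ p = -(1 / 2) * pdXi (fun s => Qh₁ s * Qh₂ s) p) := by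
    -- t-derivatives of the β's
  have hβt : ∀ (β : ℝ × ℝ → ℂ), ContDiff ℝ (⊤ : ℕ∞) β → ∀ (σ : ℂ),
      (∀ ξ t : ℝ, deriv (fun s => β (ξ, s)) t = σ * deriv (fun s => pd1 β (s, t)) ξ) →
      ∀ ζ s : ℝ, HasDerivAt (fun y => β (ζ, y)) (σ * pd1 (pd1 β) (ζ, s)) s := by
    intro β hβsm σ hβeq ζ s
    have hdiff : DifferentiableAt ℝ (fun y => β (ζ, y)) s :=
      (hβsm.differentiable (by simp) (ζ, s)).comp s
        (DifferentiableAt.prodMk (differentiableAt_const ζ) differentiableAt_id)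
    have h := hdiff.hasDerivAt
    rw [hβeq ζ s] at h
    exact h
  have hβ₁t := hβt β₁ hβ₁s Complex.I hβ₁
  have hβ₂t := hβt β₂ hβ₂s Complex.I hβ₂
  have hβ₃t := hβt β₃ hβ₃s (-Complex.I) hβ₃
  have hβ₄t := hβt β₄ hβ₄s (-Complex.I) hβ₄
  -- ξ-derivative of R
  have hRξ0 : ∀ x y t : ℝ, HasDerivAt (fun s => R (s, y, t))
      (β₁ (x, t) * β₃ (x, t)) x := by
    intro x y t
    have hcont : Continuous fun ζ => β₁ (ζ, t) * β₃ (ζ, t) :=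
      ((hβ₁s.continuous.comp (continuous_id.prodMk continuous_const)).mul
        (hβ₃s.continuous.comp (continuous_id.prodMk continuous_const)))
    have hfun : (fun s => R (s, y, t)) = fun s =>
        (∫ ζ in (0:ℝ)..s, β₁ (ζ, t) * β₃ (ζ, t))
          + (∫ ν in (0:ℝ)..y, β₂ (ν, t) * β₄ (ν, t)) + C :=
      funext fun s => by simp only [hR]
    rw [hfun]
    have H := intervalIntegral.integral_hasDerivAt_right
      (hcont.intervalIntegrable 0 x) (hcont.stronglyMeasurableAtFilter _ _)
      hcont.continuousAt
    exact (H.add_const _).add_const _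
  -- η-derivative of R
  have hRη0 : ∀ x y t : ℝ, HasDerivAt (fun s => R (x, s, t))
      (β₂ (y, t) * β₄ (y, t)) y := by
    intro x y t
    have hcont : Continuous fun ν => β₂ (ν, t) * β₄ (ν, t) :=
      ((hβ₂s.continuous.comp (continuous_id.prodMk continuous_const)).mul
        (hβ₄s.continuous.comp (continuous_id.prodMk continuous_const)))
    have hfun : (fun s => R (x, s, t)) = fun s =>
        ((∫ ν in (0:ℝ)..s, β₂ (ν, t) * β₄ (ν, t))
          + (∫ ζ in (0:ℝ)..x, β₁ (ζ, t) * β₃ (ζ, t))) + C :=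
      funext fun s => by simp only [hR]; ring
    rw [hfun]
    have H := intervalIntegral.integral_hasDerivAt_right
      (hcont.intervalIntegrable 0 y) (hcont.stronglyMeasurableAtFilter _ _)
      hcont.continuousAt
    exact (H.add_const _).add_const _
  -- t-derivative of R
  have hRt0 : ∀ x y t : ℝ, HasDerivAt (fun s => R (x, y, s))
      (Complex.I * ((pd1 β₁ (x, t) * β₃ (x, t) - β₁ (x, t) * pd1 β₃ (x, t))
        + (pd1 β₂ (y, t) * β₄ (y, t) - β₂ (y, t) * pd1 β₄ (y, t)))) t := by
    intro x y t
    have key : ∀ (α γ : ℝ × ℝ → ℂ), ContDiff ℝ (⊤ : ℕ∞) α → ContDiff ℝ (⊤ : ℕ∞) γ →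
        ∀ (σ : ℂ),
        (∀ ζ s : ℝ, HasDerivAt (fun y => α (ζ, y)) (σ * pd1 (pd1 α) (ζ, s)) s) →
        (∀ ζ s : ℝ, HasDerivAt (fun y => γ (ζ, y)) (-σ * pd1 (pd1 γ) (ζ, s)) s) →
        ∀ z : ℝ, HasDerivAt (fun s => ∫ ζ in (0:ℝ)..z, α (ζ, s) * γ (ζ, s))
          (σ * ((pd1 α (z, t) * γ (z, t) - α (z, t) * pd1 γ (z, t))
            - (pd1 α (0, t) * γ (0, t) - α (0, t) * pd1 γ (0, t)))) t := by
      intro α γ hα hγ σ hαt hγt z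
      have hF'c : Continuous fun p : ℝ × ℝ =>
          σ * (pd1 (pd1 α) (p.2, p.1) * γ (p.2, p.1) - α (p.2, p.1) * pd1 (pd1 γ) (p.2, p.1)) :=
        (continuous_const.mul
          ((((contDiff_pd1 (contDiff_pd1 hα)).continuous.comp continuous_swap).mul
              (hγ.continuous.comp continuous_swap)).sub
            ((hα.continuous.comp continuous_swap).mul
              ((contDiff_pd1 (contDiff_pd1 hγ)).continuous.comp continuous_swap))))
      have H := hasDerivAt_param_integral
        (F := fun s ζ => α (ζ, s) * γ (ζ, s))
        (F' := fun s ζ => σ * (pd1 (pd1 α) (ζ, s) * γ (ζ, s) - α (ζ, s) * pd1 (pd1 γ) (ζ, s)))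
        (a := 0) (b := z) (x₀ := t)
        ((hα.continuous.comp continuous_swap).mul (hγ.continuous.comp continuous_swap))
        hF'c
        (fun s ζ => ((hαt ζ s).mul (hγt ζ s)).congr_deriv (by ring))
      have e : (∫ ζ in (0:ℝ)..z,
          σ * (pd1 (pd1 α) (ζ, t) * γ (ζ, t) - α (ζ, t) * pd1 (pd1 γ) (ζ, t)))
          = σ * ((pd1 α (z, t) * γ (z, t) - α (z, t) * pd1 γ (z, t))
            - (pd1 α (0, t) * γ (0, t) - α (0, t) * pd1 γ (0, t))) := by
        rw [intervalIntegral.integral_const_mul]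
        congr 1
        have hW : ∀ w : ℝ, HasDerivAt
            (fun ζ => pd1 α (ζ, t) * γ (ζ, t) - α (ζ, t) * pd1 γ (ζ, t))
            (pd1 (pd1 α) (w, t) * γ (w, t) - α (w, t) * pd1 (pd1 γ) (w, t)) w := by
          intro w
          have h1 := (hasDerivAt_pd1 (contDiff_pd1 hα) w t).mul (hasDerivAt_pd1 hγ w t)
          have h2 := (hasDerivAt_pd1 hα w t).mul (hasDerivAt_pd1 (contDiff_pd1 hγ) w t)
          exact (h1.sub h2).congr_deriv (by ring)
        have hic : Continuous fun ζ =>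
            pd1 (pd1 α) (ζ, t) * γ (ζ, t) - α (ζ, t) * pd1 (pd1 γ) (ζ, t) :=
          (((contDiff_pd1 (contDiff_pd1 hα)).continuous.comp
              (continuous_id.prodMk continuous_const)).mul
            (hγ.continuous.comp (continuous_id.prodMk continuous_const))).sub
          ((hα.continuous.comp (continuous_id.prodMk continuous_const)).mul
            ((contDiff_pd1 (contDiff_pd1 hγ)).continuous.comp
              (continuous_id.prodMk continuous_const)))
        exact intervalIntegral.integral_eq_sub_of_hasDerivAt (fun w _ => hW w)
          (hic.intervalIntegrable 0 z)
      rw [e] at H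
      exact H
    have H1 := key β₁ β₃ hβ₁s hβ₃s Complex.I hβ₁t (by simpa using hβ₃t) x
    have H2 := key β₂ β₄ hβ₂s hβ₄s Complex.I hβ₂t (by simpa using hβ₄t) y
    have hfun : (fun s => R (x, y, s)) = fun s =>
        (∫ ζ in (0:ℝ)..x, β₁ (ζ, s) * β₃ (ζ, s))
          + (∫ ν in (0:ℝ)..y, β₂ (ν, s) * β₄ (ν, s)) + C :=
      funext fun s => by simp only [hR]
    rw [hfun]
    exact ((H1.add H2).add_const C).congr_deriv
      (by linear_combination (-Complex.I) * hWronskian t)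
  refine ⟨?_, ?_, ?_, ?_⟩
  · exact main_eq β₁ β₂ β₃ β₄ hβ₁s hβ₂s hβ₃s hβ₄s Complex.I
      (by simp [Complex.I_mul_I]) hβ₁t hβ₂t R hRne hRξ0 hRη0 hRt0 Qh₁ g₁ g₂ hQh₁ hg₁ hg₂
  · have hu : ContDiff ℝ (⊤ : ℕ∞) (fun z => (2 : ℂ) * β₃ z) := contDiff_const.mul hβ₃s
    have hv : ContDiff ℝ (⊤ : ℕ∞) (fun z => (2 : ℂ) * β₄ z) := contDiff_const.mul hβ₄s
    have hφ : ContDiff ℝ (⊤ : ℕ∞) (fun z => (2⁻¹ : ℂ) * β₁ z) := contDiff_const.mul hβ₁s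
    have hψ : ContDiff ℝ (⊤ : ℕ∞) (fun z => (2⁻¹ : ℂ) * β₂ z) := contDiff_const.mul hβ₂s
    have hut : ∀ x t : ℝ, HasDerivAt (fun s => (2 : ℂ) * β₃ (x, s))
        (-Complex.I * pd1 (pd1 (fun z => (2 : ℂ) * β₃ z)) (x, t)) t := by
      intro x t
      exact ((hβ₃t x t).const_mul (2 : ℂ)).congr_deriv
        (by rw [pd1_pd1_const_mul hβ₃s]; ring)
    have hvt : ∀ y t : ℝ, HasDerivAt (fun s => (2 : ℂ) * β₄ (y, s))
        (-Complex.I * pd1 (pd1 (fun z => (2 : ℂ) * β₄ z)) (y, t)) t := by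
      intro y t
      exact ((hβ₄t y t).const_mul (2 : ℂ)).congr_deriv
        (by rw [pd1_pd1_const_mul hβ₄s]; ring)
    have hRξ2 : ∀ x y t : ℝ, HasDerivAt (fun s => R (s, y, t))
        ((2 : ℂ) * β₃ (x, t) * ((2⁻¹ : ℂ) * β₁ (x, t))) x :=
      fun x y t => (hRξ0 x y t).congr_deriv (by ring)
    have hRη2 : ∀ x y t : ℝ, HasDerivAt (fun s => R (x, s, t))
        ((2 : ℂ) * β₄ (y, t) * ((2⁻¹ : ℂ) * β₂ (y, t))) y :=
      fun x y t => (hRη0 x y t).congr_deriv (by ring)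
    have hRt2 : ∀ x y t : ℝ, HasDerivAt (fun s => R (x, y, s))
        (-Complex.I * ((pd1 (fun z => (2 : ℂ) * β₃ z) (x, t) * ((2⁻¹ : ℂ) * β₁ (x, t))
            - (2 : ℂ) * β₃ (x, t) * pd1 (fun z => (2⁻¹ : ℂ) * β₁ z) (x, t))
          + (pd1 (fun z => (2 : ℂ) * β₄ z) (y, t) * ((2⁻¹ : ℂ) * β₂ (y, t))
            - (2 : ℂ) * β₄ (y, t) * pd1 (fun z => (2⁻¹ : ℂ) * β₂ z) (y, t)))) t := by
      intro x y t
      refine (hRt0 x y t).congr_deriv ?_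
      rw [pd1_const_mul hβ₃s, pd1_const_mul hβ₁s, pd1_const_mul hβ₄s, pd1_const_mul hβ₂s]
      ring
    have hq2 : ∀ p : ℝ × ℝ × ℝ, Qh₂ p =
        -((2 : ℂ) * β₃ (p.1, p.2.2) * ((2 : ℂ) * β₄ (p.2.1, p.2.2))) / R p :=
      fun p => by rw [hQh₂ p]; ring
    have hg₁2 : ∀ p : ℝ × ℝ × ℝ, g₁ p =
        2 * deriv (fun s => (2 : ℂ) * β₄ (s, p.2.2) * ((2⁻¹ : ℂ) * β₂ (s, p.2.2))) p.2.1 / R p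
          - 2 * ((2 : ℂ) * β₄ (p.2.1, p.2.2) * ((2⁻¹ : ℂ) * β₂ (p.2.1, p.2.2))) ^ 2
            / (R p) ^ 2 := by
      intro p
      rw [hg₁ p, show (fun s => (2 : ℂ) * β₄ (s, p.2.2) * ((2⁻¹ : ℂ) * β₂ (s, p.2.2)))
          = (fun s => β₂ (s, p.2.2) * β₄ (s, p.2.2)) from funext fun s => by ring]
      ring
    have hg₂2 : ∀ p : ℝ × ℝ × ℝ, g₂ p =
        2 * deriv (fun s => (2 : ℂ) * β₃ (s, p.2.2) * ((2⁻¹ : ℂ) * β₁ (s, p.2.2))) p.1 / R p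
          - 2 * ((2 : ℂ) * β₃ (p.1, p.2.2) * ((2⁻¹ : ℂ) * β₁ (p.1, p.2.2))) ^ 2
            / (R p) ^ 2 := by
      intro p
      rw [hg₂ p, show (fun s => (2 : ℂ) * β₃ (s, p.2.2) * ((2⁻¹ : ℂ) * β₁ (s, p.2.2)))
          = (fun s => β₁ (s, p.2.2) * β₃ (s, p.2.2)) from funext fun s => by ring]
      ring
    exact main_eq (fun z => (2 : ℂ) * β₃ z) (fun z => (2 : ℂ) * β₄ z)
      (fun z => (2⁻¹ : ℂ) * β₁ z) (fun z => (2⁻¹ : ℂ) * β₂ z) hu hv hφ hψ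
      (-Complex.I) (by simp [Complex.I_mul_I]) hut hvt R hRne hRξ2 hRη2 hRt2
      Qh₂ g₁ g₂ hq2 hg₁2 hg₂2
  · rintro ⟨x, y, t⟩
    have hGd : deriv (fun s => β₂ (s, t) * β₄ (s, t)) y
        = pd1 β₂ (y, t) * β₄ (y, t) + β₂ (y, t) * pd1 β₄ (y, t) :=
      ((hasDerivAt_pd1 hβ₂s y t).mul (hasDerivAt_pd1 hβ₄s y t)).deriv
    have hL : pdXi g₁ (x, y, t) =
        (0 * R (x, y, t) - 2 * deriv (fun s => β₂ (s, t) * β₄ (s, t)) y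
            * (β₁ (x, t) * β₃ (x, t))) / R (x, y, t) ^ 2
        - (0 * R (x, y, t) ^ 2 - 2 * (β₂ (y, t) * β₄ (y, t)) ^ 2
            * (2 * R (x, y, t) * (β₁ (x, t) * β₃ (x, t)))) / (R (x, y, t) ^ 2) ^ 2 := by
      have hfun : (fun s => g₁ (s, y, t)) = fun s =>
          2 * deriv (fun s' => β₂ (s', t) * β₄ (s', t)) y / R (s, y, t)
            - 2 * (β₂ (y, t) * β₄ (y, t)) ^ 2 / R (s, y, t) ^ 2 :=
        funext fun s => by simp only [hg₁]
      have HD : HasDerivAt (fun s => R (s, y, t) ^ 2)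
          (2 * R (x, y, t) * (β₁ (x, t) * β₃ (x, t))) x := by
        have h := (hRξ0 x y t).fun_mul (hRξ0 x y t)
        have e : (fun s => R (s, y, t) * R (s, y, t)) = fun s => R (s, y, t) ^ 2 :=
          funext fun s => (sq _).symm
        rw [e] at h
        exact h.congr_deriv (by ring)
      have H := ((hasDerivAt_const x
            (2 * deriv (fun s' => β₂ (s', t) * β₄ (s', t)) y)).div
          (hRξ0 x y t) (hRne (x, y, t))).sub
        ((hasDerivAt_const x (2 * (β₂ (y, t) * β₄ (y, t)) ^ 2)).div HD
          (pow_ne_zero 2 (hRne (x, y, t))))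
      show deriv (fun s => g₁ (s, y, t)) x = _
      rw [hfun]
      exact H.deriv
    have hRmul : pdEta (fun s => Qh₁ s * Qh₂ s) (x, y, t) =
        ((-(β₁ (x, t) * pd1 β₂ (y, t)) * R (x, y, t)
            + β₁ (x, t) * β₂ (y, t) * (β₂ (y, t) * β₄ (y, t))) / R (x, y, t) ^ 2)
          * (-(4 * β₃ (x, t) * β₄ (y, t)) / R (x, y, t))
        + (-(β₁ (x, t) * β₂ (y, t)) / R (x, y, t)) *
          ((-(4 * β₃ (x, t) * pd1 β₄ (y, t)) * R (x, y, t)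
            + 4 * β₃ (x, t) * β₄ (y, t) * (β₂ (y, t) * β₄ (y, t))) / R (x, y, t) ^ 2) := by
      have hfun : (fun s => Qh₁ (x, s, t) * Qh₂ (x, s, t)) = fun s =>
          (-(β₁ (x, t) * β₂ (s, t)) / R (x, s, t))
            * (-(4 * β₃ (x, t) * β₄ (s, t)) / R (x, s, t)) :=
        funext fun s => by simp only [hQh₁, hQh₂]
      have H1 : HasDerivAt (fun s => -(β₁ (x, t) * β₂ (s, t)) / R (x, s, t))
          ((-(β₁ (x, t) * pd1 β₂ (y, t)) * R (x, y, t)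
            + β₁ (x, t) * β₂ (y, t) * (β₂ (y, t) * β₄ (y, t))) / R (x, y, t) ^ 2) y :=
        ((((hasDerivAt_pd1 hβ₂s y t).const_mul (β₁ (x, t))).fun_neg.div
          (hRη0 x y t) (hRne (x, y, t)))).congr_deriv (by ring)
      have H2 : HasDerivAt (fun s => -(4 * β₃ (x, t) * β₄ (s, t)) / R (x, s, t))
          ((-(4 * β₃ (x, t) * pd1 β₄ (y, t)) * R (x, y, t)
            + 4 * β₃ (x, t) * β₄ (y, t) * (β₂ (y, t) * β₄ (y, t))) / R (x, y, t) ^ 2) y :=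
        ((((hasDerivAt_pd1 hβ₄s y t).const_mul (4 * β₃ (x, t))).fun_neg.div
          (hRη0 x y t) (hRne (x, y, t)))).congr_deriv (by ring)
      have H := H1.mul H2
      show deriv (fun s => Qh₁ (x, s, t) * Qh₂ (x, s, t)) y = _
      rw [hfun]
      exact H.deriv
    rw [hL, hRmul, hGd]
    linear_combination (2 * (β₁ (x, t) * β₃ (x, t))
        * (pd1 β₂ (y, t) * β₄ (y, t) + β₂ (y, t) * pd1 β₄ (y, t)) * (R (x, y, t))⁻¹ ^ 2
      + 4 * (β₁ (x, t) * β₃ (x, t)) * (β₂ (y, t) * β₄ (y, t)) ^ 2 * (R (x, y, t))⁻¹ ^ 3)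
      * (mul_inv_cancel₀ (hRne (x, y, t)))
  · rintro ⟨x, y, t⟩
    have hFd : deriv (fun s => β₁ (s, t) * β₃ (s, t)) x
        = pd1 β₁ (x, t) * β₃ (x, t) + β₁ (x, t) * pd1 β₃ (x, t) :=
      ((hasDerivAt_pd1 hβ₁s x t).mul (hasDerivAt_pd1 hβ₃s x t)).deriv
    have hL : pdEta g₂ (x, y, t) =
        (0 * R (x, y, t) - 2 * deriv (fun s => β₁ (s, t) * β₃ (s, t)) x
            * (β₂ (y, t) * β₄ (y, t))) / R (x, y, t) ^ 2
        - (0 * R (x, y, t) ^ 2 - 2 * (β₁ (x, t) * β₃ (x, t)) ^ 2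
            * (2 * R (x, y, t) * (β₂ (y, t) * β₄ (y, t)))) / (R (x, y, t) ^ 2) ^ 2 := by
      have hfun : (fun s => g₂ (x, s, t)) = fun s =>
          2 * deriv (fun s' => β₁ (s', t) * β₃ (s', t)) x / R (x, s, t)
            - 2 * (β₁ (x, t) * β₃ (x, t)) ^ 2 / R (x, s, t) ^ 2 :=
        funext fun s => by simp only [hg₂]
      have HD : HasDerivAt (fun s => R (x, s, t) ^ 2)
          (2 * R (x, y, t) * (β₂ (y, t) * β₄ (y, t))) y := by
        have h := (hRη0 x y t).fun_mul (hRη0 x y t)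
        have e : (fun s => R (x, s, t) * R (x, s, t)) = fun s => R (x, s, t) ^ 2 :=
          funext fun s => (sq _).symm
        rw [e] at h
        exact h.congr_deriv (by ring)
      have H := ((hasDerivAt_const y
            (2 * deriv (fun s' => β₁ (s', t) * β₃ (s', t)) x)).div
          (hRη0 x y t) (hRne (x, y, t))).sub
        ((hasDerivAt_const y (2 * (β₁ (x, t) * β₃ (x, t)) ^ 2)).div HD
          (pow_ne_zero 2 (hRne (x, y, t))))
      show deriv (fun s => g₂ (x, s, t)) y = _
      rw [hfun]
      exact H.deriv
    have hRmul : pdXi (fun s => Qh₁ s * Qh₂ s) (x, y, t) =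
        ((-(pd1 β₁ (x, t) * β₂ (y, t)) * R (x, y, t)
            + β₁ (x, t) * β₂ (y, t) * (β₁ (x, t) * β₃ (x, t))) / R (x, y, t) ^ 2)
          * (-(4 * β₃ (x, t) * β₄ (y, t)) / R (x, y, t))
        + (-(β₁ (x, t) * β₂ (y, t)) / R (x, y, t)) *
          ((-(4 * pd1 β₃ (x, t) * β₄ (y, t)) * R (x, y, t)
            + 4 * β₃ (x, t) * β₄ (y, t) * (β₁ (x, t) * β₃ (x, t))) / R (x, y, t) ^ 2) := by
      have hfun : (fun s => Qh₁ (s, y, t) * Qh₂ (s, y, t)) = fun s =>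
          (-(β₁ (s, t) * β₂ (y, t)) / R (s, y, t))
            * (-(4 * β₃ (s, t) * β₄ (y, t)) / R (s, y, t)) :=
        funext fun s => by simp only [hQh₁, hQh₂]
      have H1 : HasDerivAt (fun s => -(β₁ (s, t) * β₂ (y, t)) / R (s, y, t))
          ((-(pd1 β₁ (x, t) * β₂ (y, t)) * R (x, y, t)
            + β₁ (x, t) * β₂ (y, t) * (β₁ (x, t) * β₃ (x, t))) / R (x, y, t) ^ 2) x :=
        ((((hasDerivAt_pd1 hβ₁s x t).mul_const (β₂ (y, t))).fun_neg.div
          (hRξ0 x y t) (hRne (x, y, t)))).congr_deriv (by ring)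
      have H2 : HasDerivAt (fun s => -(4 * β₃ (s, t) * β₄ (y, t)) / R (s, y, t))
          ((-(4 * pd1 β₃ (x, t) * β₄ (y, t)) * R (x, y, t)
            + 4 * β₃ (x, t) * β₄ (y, t) * (β₁ (x, t) * β₃ (x, t))) / R (x, y, t) ^ 2) x :=
        (((((hasDerivAt_pd1 hβ₃s x t).const_mul (4 : ℂ)).mul_const (β₄ (y, t))).fun_neg.div
          (hRξ0 x y t) (hRne (x, y, t)))).congr_deriv (by ring)
      have H := H1.mul H2
      show deriv (fun s => Qh₁ (s, y, t) * Qh₂ (s, y, t)) x = _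
      rw [hfun]
      exact H.deriv
    rw [hL, hRmul, hFd]
    linear_combination (2 * (β₂ (y, t) * β₄ (y, t))
        * (pd1 β₁ (x, t) * β₃ (x, t) + β₁ (x, t) * pd1 β₃ (x, t)) * (R (x, y, t))⁻¹ ^ 2
      + 4 * (β₂ (y, t) * β₄ (y, t)) * (β₁ (x, t) * β₃ (x, t)) ^ 2 * (R (x, y, t))⁻¹ ^ 3)
      * (mul_inv_cancel₀ (hRne (x, y, t)))
end

section
/- Let β₁ : ℝ × ℝ → ℂ be a smooth function of (ξ,t) with β₁,t = i·β₁,ξξ, and let β₂ : ℝ × ℝ → ℂ be a smooth function of (η,t) with β₂,t = i·β₂,ηη. Assume that for all t ∈ ℝ: Im(β₁,ξ(0,t)·conj(β₁(0,t))) + Im(β₂,η(0,t)·conj(β₂(0,t))) = 0. Let C ∈ ℝ be a constant, define R(ξ,η,t) := (1/2)∫₀^ξ |β₁(ζ,t)|²dζ + (1/2)∫₀^η |β₂(ν,t)|²dν + C, and assume R(ξ,η,t) ≠ 0 for all (ξ,η,t). Define u := −β₁β₂/R and v := (∂|β₁|²/∂ξ + ∂|β₂|²/∂η)/R − (|β₁|⁴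 + |β₂|⁴)/(2R²). Then (u,v) solves the Davey–Stewartson I equation: i·u_t + u_{ξξ} + u_{ηη} + u·v = 0 and v_{ξη} + (1/2)·((|u|²)_{ξξ} + (|u|²)_{ηη}) = 0. -/
open intervalIntegral

/-- Partial derivative in the first (ξ) variable of a real function of `(ξ, η, t)`. -/
noncomputable def pdXiR (f : ℝ × ℝ × ℝ → ℝ) (p : ℝ × ℝ × ℝ) : ℝ :=
  deriv (fun s => f (s, p.2.1, p.2.2)) p.1

/-- Partial derivative in the second (η) variable of a real function. -/
noncomputable def pdEtaR (f : ℝ × ℝ × ℝ → ℝ) (p : ℝ × ℝ × ℝ) : ℝ :=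
  deriv (fun s => f (p.1, s, p.2.2)) p.2.1

open Complex intervalIntegral MeasureTheory Metric Set

namespace DS

variable {F : Type*} [NormedAddCommGroup F] [NormedSpace ℝ F]

noncomputable def pd1' (f : ℝ × ℝ → F) (p : ℝ × ℝ) : F :=
  deriv (fun s => f (s, p.2)) p.1

noncomputable def pd2' (f : ℝ × ℝ → F) (p : ℝ × ℝ) : F :=
  deriv (fun s => f (p.1, s)) p.2

theorem hasDerivAt_slice1 {f : ℝ × ℝ → F} (hf : ContDiff ℝ (⊤ : ℕ∞) f) (ξ t : ℝ) :
    HasDerivAt (fun s => f (s, t)) (pd1' f (ξ, t)) ξ := by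
  have h : DifferentiableAt ℝ (fun s => f (s, t)) ξ :=
    ((hf.differentiable (by simp)).comp
      ((differentiable_id.prodMk (differentiable_const t)))).differentiableAt
  exact h.hasDerivAt

theorem hasDerivAt_slice2 {f : ℝ × ℝ → F} (hf : ContDiff ℝ (⊤ : ℕ∞) f) (ξ t : ℝ) :
    HasDerivAt (fun s => f (ξ, s)) (pd2' f (ξ, t)) t := by
  have h : DifferentiableAt ℝ (fun s => f (ξ, s)) t :=
    ((hf.differentiable (by simp)).comp
      (((differentiable_const ξ).prodMk differentiable_id))).differentiableAt
  exact h.hasDerivAt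

theorem pd1'_eq_fderiv {f : ℝ × ℝ → F} (hf : ContDiff ℝ (⊤ : ℕ∞) f) (p : ℝ × ℝ) :
    pd1' f p = fderiv ℝ f p ((1 : ℝ), (0 : ℝ)) := by
  have hcurve : HasDerivAt (fun s : ℝ => (s, p.2)) ((1 : ℝ), (0 : ℝ)) p.1 :=
    (hasDerivAt_id p.1).prodMk (hasDerivAt_const _ _)
  have hF : HasFDerivAt f (fderiv ℝ f p) ((fun s : ℝ => (s, p.2)) p.1) := by
    simpa using ((hf.differentiable (by simp)) p).hasFDerivAt
  have := hF.comp_hasDerivAt p.1 hcurve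
  exact this.deriv

theorem contDiff_pd1' {f : ℝ × ℝ → F} (hf : ContDiff ℝ (⊤ : ℕ∞) f) :
    ContDiff ℝ (⊤ : ℕ∞) (pd1' f) := by
  have : pd1' f = fun p => fderiv ℝ f p ((1 : ℝ), (0 : ℝ)) :=
    funext fun p => pd1'_eq_fderiv hf p
  rw [this]
  exact (hf.fderiv_right (by simp)).clm_apply contDiff_const

theorem hasDerivAt_conj {f : ℝ → ℂ} {f' : ℂ} {x : ℝ} (hf : HasDerivAt f f' x) :
    HasDerivAt (fun s => (starRingEnd ℂ) (f s)) ((starRingEnd ℂ) f') x :=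
  Complex.conjCLE.toContinuousLinearMap.hasFDerivAt.comp_hasDerivAt x hf

theorem hasDerivAt_abs_sq {f : ℝ → ℂ} {f' : ℂ} {x : ℝ} (hf : HasDerivAt f f' x) :
    HasDerivAt (fun s => ‖f s‖ ^ 2) (2 * (f' * (starRingEnd ℂ) (f x)).re) x := by
  have hre : HasDerivAt (fun s => (f s).re) f'.re x :=
    Complex.reCLM.hasFDerivAt.comp_hasDerivAt x hf
  have him : HasDerivAt (fun s => (f s).im) f'.im x :=
    Complex.imCLM.hasFDerivAt.comp_hasDerivAt x hf
  have h : HasDerivAt (fun s => (f s).re * (f s).re + (f s).im * (f s).im) _ x :=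
    (hre.mul hre).add (him.mul him)
  have hfun : (fun s => (f s).re * (f s).re + (f s).im * (f s).im)
      = fun s => ‖f s‖ ^ 2 := by
    funext s
    rw [Complex.sq_norm, Complex.normSq_apply]
  rw [hfun] at h
  convert h using 1
  simp [Complex.mul_re, Complex.conj_re, Complex.conj_im]
  ring

theorem hasDerivAt_primitive {g : ℝ × ℝ → ℝ} (hg : Continuous g) (ξ t : ℝ) :
    HasDerivAt (fun s => ∫ x in (0:ℝ)..s, g (x, t)) (g (ξ, t)) ξ := by
  have hc : Continuous (fun x : ℝ => g (x, t)) :=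
    hg.comp (continuous_id.prodMk continuous_const)
  exact intervalIntegral.integral_hasDerivAt_right (hc.intervalIntegrable _ _)
    (hc.stronglyMeasurableAtFilter _ _) hc.continuousAt

theorem hasDerivAt_param_integral {g gt : ℝ × ℝ → ℝ} (hg : Continuous g) (hgt : Continuous gt)
    (hd : ∀ x t : ℝ, HasDerivAt (fun s => g (x, s)) (gt (x, t)) t) (ξ t₀ : ℝ) :
    HasDerivAt (fun τ => ∫ x in (0:ℝ)..ξ, g (x, τ)) (∫ x in (0:ℝ)..ξ, gt (x, t₀)) t₀ := by
  obtain ⟨M, hM⟩ : ∃ M, ∀ y ∈ (Set.uIcc (0:ℝ) ξ ×ˢ Set.Icc (t₀-1) (t₀+1)), ‖gt y‖ ≤ M :=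
    (isCompact_uIcc.prod isCompact_Icc).exists_bound_of_continuousOn hgt.continuousOn
  have key := intervalIntegral.hasDerivAt_integral_of_dominated_loc_of_deriv_le
    (F := fun τ x => g (x, τ)) (F' := fun τ x => gt (x, τ)) (bound := fun _ => M)
    (μ := volume) (a := 0) (b := ξ) (x₀ := t₀) (s := Metric.ball t₀ 1) (Metric.ball_mem_nhds t₀ one_pos)
    ?_ ?_ ?_ ?_ ?_ ?_
  · exact key.2
  · filter_upwards with τ
    exact (hg.comp (continuous_id.prodMk continuous_const)).aestronglyMeasurable
  · exact (hg.comp (continuous_id.prodMk continuous_const)).intervalIntegrable _ _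
  · exact (hgt.comp (continuous_id.prodMk continuous_const)).aestronglyMeasurable
  · filter_upwards with x hx τ hτ
    refine hM _ ⟨uIoc_subset_uIcc hx, ?_⟩
    rw [Real.ball_eq_Ioo] at hτ
    exact ⟨le_of_lt hτ.1, le_of_lt hτ.2⟩
  · exact intervalIntegrable_const
  · filter_upwards with x hx τ hτ
    exact hd x τ

end DS

namespace DS

theorem hasDerivAt_re_comp {f : ℝ → ℂ} {f' : ℂ} {x : ℝ} (hf : HasDerivAt f f' x) :
    HasDerivAt (fun s => (f s).re) f'.re x :=
  Complex.reCLM.hasFDerivAt.comp_hasDerivAt x hf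

theorem hasDerivAt_im_comp {f : ℝ → ℂ} {f' : ℂ} {x : ℝ} (hf : HasDerivAt f f' x) :
    HasDerivAt (fun s => (f s).im) f'.im x :=
  Complex.imCLM.hasFDerivAt.comp_hasDerivAt x hf

noncomputable def Q (f : ℝ × ℝ → ℂ) (x : ℝ × ℝ) : ℝ := ‖f x‖ ^ 2

noncomputable def Qd (f : ℝ × ℝ → ℂ) (x : ℝ × ℝ) : ℝ :=
  2 * (pd1' f x * (starRingEnd ℂ) (f x)).re

noncomputable def Qdd (f : ℝ × ℝ → ℂ) (x : ℝ × ℝ) : ℝ :=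
  2 * (pd1' (pd1' f) x * (starRingEnd ℂ) (f x) + pd1' f x * (starRingEnd ℂ) (pd1' f x)).re

noncomputable def Qt (f : ℝ × ℝ → ℂ) (x : ℝ × ℝ) : ℝ :=
  2 * (Complex.I * pd1' (pd1' f) x * (starRingEnd ℂ) (f x)).re

noncomputable def Aim (f : ℝ × ℝ → ℂ) (x : ℝ × ℝ) : ℝ :=
  (pd1' f x * (starRingEnd ℂ) (f x)).im

variable {f : ℝ × ℝ → ℂ}

theorem hasDerivAt_Q (hf : ContDiff ℝ (⊤ : ℕ∞) f) (ξ t : ℝ) :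
    HasDerivAt (fun s => Q f (s, t)) (Qd f (ξ, t)) ξ :=
  hasDerivAt_abs_sq (hasDerivAt_slice1 hf ξ t)

theorem hasDerivAt_Qd (hf : ContDiff ℝ (⊤ : ℕ∞) f) (ξ t : ℝ) :
    HasDerivAt (fun s => Qd f (s, t)) (Qdd f (ξ, t)) ξ := by
  have h := ((hasDerivAt_slice1 (contDiff_pd1' hf) ξ t).mul
    (hasDerivAt_conj (hasDerivAt_slice1 hf ξ t)))
  exact (hasDerivAt_re_comp h).const_mul 2

theorem hasDerivAt_Q_t (hf : ContDiff ℝ (⊤ : ℕ∞) f)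
    (heat : ∀ ξ t : ℝ, deriv (fun s => f (ξ, s)) t
      = Complex.I * deriv (fun s => pd1' f (s, t)) ξ) (ξ t : ℝ) :
    HasDerivAt (fun s => Q f (ξ, s)) (Qt f (ξ, t)) t := by
  have h2 : HasDerivAt (fun s => f (ξ, s)) (Complex.I * pd1' (pd1' f) (ξ, t)) t := by
    have h := hasDerivAt_slice2 hf ξ t
    have : pd2' f (ξ, t) = Complex.I * pd1' (pd1' f) (ξ, t) := heat ξ t
    rwa [this] at h
  exact hasDerivAt_abs_sq h2

theorem hasDerivAt_neg2Aim (hf : ContDiff ℝ (⊤ : ℕ∞) f) (ξ t : ℝ) :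
    HasDerivAt (fun s => -2 * Aim f (s, t)) (Qt f (ξ, t)) ξ := by
  have h := ((hasDerivAt_slice1 (contDiff_pd1' hf) ξ t).mul
    (hasDerivAt_conj (hasDerivAt_slice1 hf ξ t)))
  have h2 := (hasDerivAt_im_comp h).const_mul (-2 : ℝ)
  refine h2.congr_deriv ?_
  simp only [Qt, Complex.mul_re, Complex.mul_im, Complex.add_im, Complex.I_re, Complex.I_im,
    Complex.conj_re, Complex.conj_im]
  ring

theorem continuous_Q (hf : ContDiff ℝ (⊤ : ℕ∞) f) : Continuous (Q f) :=
  (continuous_norm.comp hf.continuous).pow 2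

theorem continuous_Qt (hf : ContDiff ℝ (⊤ : ℕ∞) f) : Continuous (Qt f) := by
  have hA' : Continuous (pd1' (pd1' f)) := (contDiff_pd1' (contDiff_pd1' hf)).continuous
  exact continuous_const.mul (Complex.continuous_re.comp
    (((continuous_const.mul hA').mul
      (Complex.continuous_conj.comp hf.continuous))))

theorem integral_Qt (hf : ContDiff ℝ (⊤ : ℕ∞) f) (ξ t : ℝ) :
    (∫ ζ in (0:ℝ)..ξ, Qt f (ζ, t)) = -2 * Aim f (ξ, t) + 2 * Aim f (0, t) := by
  have h := intervalIntegral.integral_eq_sub_of_hasDerivAt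
    (f := fun s => -2 * Aim f (s, t)) (f' := fun s => Qt f (s, t)) (a := 0) (b := ξ)
    (fun ζ _ => hasDerivAt_neg2Aim hf ζ t)
    (((continuous_Qt hf).comp (continuous_id.prodMk continuous_const)).intervalIntegrable _ _)
  rw [h]; ring

theorem hasDerivAt_primitive_x (hf : ContDiff ℝ (⊤ : ℕ∞) f) (ξ t : ℝ) :
    HasDerivAt (fun s => ∫ x in (0:ℝ)..s, Q f (x, t)) (Q f (ξ, t)) ξ :=
  hasDerivAt_primitive (continuous_Q hf) ξ t

theorem hasDerivAt_primitive_t (hf : ContDiff ℝ (⊤ : ℕ∞) f)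
    (heat : ∀ ξ t : ℝ, deriv (fun s => f (ξ, s)) t
      = Complex.I * deriv (fun s => pd1' f (s, t)) ξ) (ξ t : ℝ) :
    HasDerivAt (fun τ => ∫ x in (0:ℝ)..ξ, Q f (x, τ))
      (-2 * Aim f (ξ, t) + 2 * Aim f (0, t)) t := by
  have h := hasDerivAt_param_integral (continuous_Q hf) (continuous_Qt hf)
    (fun x s => hasDerivAt_Q_t hf heat x s) ξ t
  rwa [integral_Qt hf ξ t] at h

theorem cast_Q (x : ℝ × ℝ) : ((Q f x : ℝ) : ℂ) = f x * (starRingEnd ℂ) (f x) := by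
  rw [show Q f x = Complex.normSq (f x) from Complex.sq_norm _]
  exact (Complex.mul_conj _).symm

theorem cast_Qd (x : ℝ × ℝ) : ((Qd f x : ℝ) : ℂ)
    = pd1' f x * (starRingEnd ℂ) (f x) + (starRingEnd ℂ) (pd1' f x) * f x := by
  have h := Complex.add_conj (pd1' f x * (starRingEnd ℂ) (f x))
  push_cast at h
  rw [Qd]
  push_cast
  rw [show (2:ℂ) * ((pd1' f x * (starRingEnd ℂ) (f x)).re : ℂ) = 2 * ((pd1' f x * (starRingEnd ℂ) (f x)).re : ℂ) from rfl, ← h]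
  simp [map_mul]

theorem cast_Aim (x : ℝ × ℝ) : ((Aim f x : ℝ) : ℂ)
    = (pd1' f x * (starRingEnd ℂ) (f x) - (starRingEnd ℂ) (pd1' f x) * f x)
      * (-Complex.I) / 2 := by
  have h := Complex.sub_conj (pd1' f x * (starRingEnd ℂ) (f x))
  rw [show (starRingEnd ℂ) (pd1' f x) * f x
      = (starRingEnd ℂ) (pd1' f x * (starRingEnd ℂ) (f x)) from by simp [map_mul]]
  rw [h, Aim]
  push_cast
  linear_combination (((pd1' f x * (starRingEnd ℂ) (f x)).im : ℂ)) * Complex.I_mul_I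


theorem hasDerivAt_ofReal_pow {f : ℝ → ℝ} {f' : ℝ} {x : ℝ} (n : ℕ) (h : HasDerivAt f f' x) :
    HasDerivAt (fun y => ((f y : ℝ) : ℂ) ^ n) (((n * f x ^ (n - 1) * f' : ℝ) : ℂ)) x := by
  have h1 := (h.pow n).ofReal_comp
  exact h1.congr_of_eventuallyEq
    (Filter.Eventually.of_forall fun y => (Complex.ofReal_pow _ _).symm)

end DS


set_option maxHeartbeats 4000000 in
/-- The explicit formulas built from two solutions `β₁, β₂`
of the heat equation with imaginary time give a solution of the
Davey–Stewartson I equation. -/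
theorem davey_stewartson_solution
    (β₁ β₂ : ℝ × ℝ → ℂ)
    (hβ₁s : ContDiff ℝ (⊤ : ℕ∞) β₁) (hβ₂s : ContDiff ℝ (⊤ : ℕ∞) β₂)
    (hβ₁ : ∀ ξ t : ℝ, deriv (fun s => β₁ (ξ, s)) t =
      Complex.I * deriv (fun s => pd1 β₁ (s, t)) ξ)
    (hβ₂ : ∀ η t : ℝ, deriv (fun s => β₂ (η, s)) t =
      Complex.I * deriv (fun s => pd1 β₂ (s, t)) η)
    (hbc : ∀ t : ℝ,
      (pd1 β₁ (0, t) * (starRingEnd ℂ) (β₁ (0, t))).im +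
      (pd1 β₂ (0, t) * (starRingEnd ℂ) (β₂ (0, t))).im = 0)
    (C : ℝ)
    (R : ℝ × ℝ × ℝ → ℝ)
    (hR : ∀ p : ℝ × ℝ × ℝ, R p =
      (1 / 2) * (∫ ζ in (0:ℝ)..p.1, ‖β₁ (ζ, p.2.2)‖ ^ 2) +
      (1 / 2) * (∫ ν in (0:ℝ)..p.2.1, ‖β₂ (ν, p.2.2)‖ ^ 2) + C)
    (hRne : ∀ p, R p ≠ 0)
    (u : ℝ × ℝ × ℝ → ℂ) (v : ℝ × ℝ × ℝ → ℝ)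
    (hu : ∀ p : ℝ × ℝ × ℝ, u p = -(β₁ (p.1, p.2.2) * β₂ (p.2.1, p.2.2)) / (R p : ℂ))
    (hv : ∀ p : ℝ × ℝ × ℝ, v p =
      (deriv (fun s => ‖β₁ (s, p.2.2)‖ ^ 2) p.1
        + deriv (fun s => ‖β₂ (s, p.2.2)‖ ^ 2) p.2.1) / R p
      - (‖β₁ (p.1, p.2.2)‖ ^ 4 + ‖β₂ (p.2.1, p.2.2)‖ ^ 4)
          / (2 * (R p) ^ 2)) :
    (∀ p, Complex.I * pdT u p + pdXi (pdXi u) p + pdEta (pdEta u) p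
        + u p * (v p : ℂ) = 0) ∧
    (∀ p, pdXiR (pdEtaR v) p
        + (1 / 2) * (pdXiR (pdXiR (fun s => ‖u s‖ ^ 2)) p
          + pdEtaR (pdEtaR (fun s => ‖u s‖ ^ 2)) p) = 0) := by
  -- abbreviations for the basic atoms
  have heat₁ : ∀ ξ t : ℝ, deriv (fun s => β₁ (ξ, s)) t
      = Complex.I * deriv (fun s => DS.pd1' β₁ (s, t)) ξ := hβ₁
  have heat₂ : ∀ η t : ℝ, deriv (fun s => β₂ (η, s)) t
      = Complex.I * deriv (fun s => DS.pd1' β₂ (s, t)) η := hβ₂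
  have hbc' : ∀ t : ℝ, DS.Aim β₁ (0, t) + DS.Aim β₂ (0, t) = 0 := hbc
  have hane : ∀ p : ℝ × ℝ × ℝ, ((R p : ℝ) : ℂ) ≠ 0 :=
    fun p => Complex.ofReal_ne_zero.mpr (hRne p)
  -- slice derivatives of the basic functions
  have hb1x : ∀ ξ t : ℝ, HasDerivAt (fun s => β₁ (s, t)) (DS.pd1' β₁ (ξ, t)) ξ :=
    fun ξ t => DS.hasDerivAt_slice1 hβ₁s ξ t
  have hb2x : ∀ η t : ℝ, HasDerivAt (fun s => β₂ (s, t)) (DS.pd1' β₂ (η, t)) η :=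
    fun η t => DS.hasDerivAt_slice1 hβ₂s η t
  have hA2x : ∀ ξ t : ℝ, HasDerivAt (fun s => DS.pd1' β₁ (s, t))
      (DS.pd1' (DS.pd1' β₁) (ξ, t)) ξ :=
    fun ξ t => DS.hasDerivAt_slice1 (DS.contDiff_pd1' hβ₁s) ξ t
  have hB2x : ∀ η t : ℝ, HasDerivAt (fun s => DS.pd1' β₂ (s, t))
      (DS.pd1' (DS.pd1' β₂) (η, t)) η :=
    fun η t => DS.hasDerivAt_slice1 (DS.contDiff_pd1' hβ₂s) η t
  have hb1t : ∀ ξ t : ℝ, HasDerivAt (fun s => β₁ (ξ, s))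
      (Complex.I * DS.pd1' (DS.pd1' β₁) (ξ, t)) t := by
    intro ξ t
    have h := DS.hasDerivAt_slice2 hβ₁s ξ t
    have he : DS.pd2' β₁ (ξ, t) = Complex.I * DS.pd1' (DS.pd1' β₁) (ξ, t) := heat₁ ξ t
    rwa [he] at h
  have hb2t : ∀ η t : ℝ, HasDerivAt (fun s => β₂ (η, s))
      (Complex.I * DS.pd1' (DS.pd1' β₂) (η, t)) t := by
    intro η t
    have h := DS.hasDerivAt_slice2 hβ₂s η t
    have he : DS.pd2' β₂ (η, t) = Complex.I * DS.pd1' (DS.pd1' β₂) (η, t) := heat₂ η t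
    rwa [he] at h
  have hqx : ∀ ξ t : ℝ, HasDerivAt (fun s => DS.Q β₁ (s, t)) (DS.Qd β₁ (ξ, t)) ξ :=
    fun ξ t => DS.hasDerivAt_Q hβ₁s ξ t
  have hrx : ∀ η t : ℝ, HasDerivAt (fun s => DS.Q β₂ (s, t)) (DS.Qd β₂ (η, t)) η :=
    fun η t => DS.hasDerivAt_Q hβ₂s η t
  have hq1x : ∀ ξ t : ℝ, HasDerivAt (fun s => DS.Qd β₁ (s, t)) (DS.Qdd β₁ (ξ, t)) ξ :=
    fun ξ t => DS.hasDerivAt_Qd hβ₁s ξ t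
  have hr1x : ∀ η t : ℝ, HasDerivAt (fun s => DS.Qd β₂ (s, t)) (DS.Qdd β₂ (η, t)) η :=
    fun η t => DS.hasDerivAt_Qd hβ₂s η t
  -- slice derivatives of R
  have hRx : ∀ ξ η t : ℝ, HasDerivAt (fun s => R (s, η, t)) ((1/2) * DS.Q β₁ (ξ, t)) ξ := by
    intro ξ η t
    have hfun : (fun s => R (s, η, t)) = fun s =>
        (1/2) * (∫ x in (0:ℝ)..s, DS.Q β₁ (x, t))
          + ((1/2) * (∫ x in (0:ℝ)..η, DS.Q β₂ (x, t)) + C) := by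
      funext s; rw [hR (s, η, t)]; simp only [DS.Q]; ring
    rw [hfun]
    exact ((DS.hasDerivAt_primitive_x hβ₁s ξ t).const_mul (1/2 : ℝ)).add_const _
  have hRy : ∀ ξ η t : ℝ, HasDerivAt (fun s => R (ξ, s, t)) ((1/2) * DS.Q β₂ (η, t)) η := by
    intro ξ η t
    have hfun : (fun s => R (ξ, s, t)) = fun s =>
        (1/2) * (∫ x in (0:ℝ)..s, DS.Q β₂ (x, t))
          + ((1/2) * (∫ x in (0:ℝ)..ξ, DS.Q β₁ (x, t)) + C) := by
      funext s; rw [hR (ξ, s, t)]; simp only [DS.Q]; ring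
    rw [hfun]
    exact ((DS.hasDerivAt_primitive_x hβ₂s η t).const_mul (1/2 : ℝ)).add_const _
  have hRt : ∀ ξ η t : ℝ, HasDerivAt (fun s => R (ξ, η, s))
      (-(DS.Aim β₁ (ξ, t)) - DS.Aim β₂ (η, t)) t := by
    intro ξ η t
    have hfun : (fun s => R (ξ, η, s)) = fun s =>
        ((1/2) * (∫ x in (0:ℝ)..ξ, DS.Q β₁ (x, s))
          + (1/2) * (∫ x in (0:ℝ)..η, DS.Q β₂ (x, s))) + C := by
      funext s; rw [hR (ξ, η, s)]; simp only [DS.Q]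
    rw [hfun]
    have h := (((DS.hasDerivAt_primitive_t hβ₁s heat₁ ξ t).const_mul (1/2 : ℝ)).add
      ((DS.hasDerivAt_primitive_t hβ₂s heat₂ η t).const_mul (1/2 : ℝ))).add_const C
    refine h.congr_deriv ?_
    have hb := hbc' t
    linarith
  -- cleaned-up formula for v
  have hv' : ∀ ξ η t : ℝ, v (ξ, η, t) =
      (DS.Qd β₁ (ξ, t) + DS.Qd β₂ (η, t)) / R (ξ, η, t)
        - (DS.Q β₁ (ξ, t) ^ 2 + DS.Q β₂ (η, t) ^ 2) / (2 * R (ξ, η, t) ^ 2) := by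
    intro ξ η t
    have d1 : deriv (fun s => ‖β₁ (s, t)‖ ^ 2) ξ = DS.Qd β₁ (ξ, t) :=
      (hqx ξ t).deriv
    have d2 : deriv (fun s => ‖β₂ (s, t)‖ ^ 2) η = DS.Qd β₂ (η, t) :=
      (hrx η t).deriv
    have e1 : ‖β₁ (ξ, t)‖ ^ 4 = DS.Q β₁ (ξ, t) ^ 2 := by
      simp only [DS.Q]; ring
    have e2 : ‖β₂ (η, t)‖ ^ 4 = DS.Q β₂ (η, t) ^ 2 := by
      simp only [DS.Q]; ring
    rw [hv (ξ, η, t)]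
    simp only []
    rw [d1, d2, e1, e2]
  -- |u|² formula
  have hw : ∀ ξ η t : ℝ, ‖u (ξ, η, t)‖ ^ 2
      = DS.Q β₁ (ξ, t) * DS.Q β₂ (η, t) / R (ξ, η, t) ^ 2 := by
    intro ξ η t
    have hup : u (ξ, η, t) = -(β₁ (ξ, t) * β₂ (η, t)) / ((R (ξ, η, t) : ℝ) : ℂ) :=
      hu (ξ, η, t)
    rw [Complex.sq_norm, hup, map_div₀]
    simp only [Complex.normSq_neg, map_mul, Complex.normSq_ofReal, DS.Q, Complex.sq_norm]
    ring

  -- ξ-derivatives of u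
  have hux : ∀ ξ η t : ℝ, HasDerivAt (fun s => u (s, η, t))
      (-(DS.pd1' β₁ (ξ, t) * β₂ (η, t)) / ((R (ξ, η, t) : ℝ) : ℂ)
        + β₁ (ξ, t) * β₂ (η, t) * ((DS.Q β₁ (ξ, t) : ℝ) : ℂ)
          / (2 * ((R (ξ, η, t) : ℝ) : ℂ) ^ 2)) ξ := by
    intro ξ η t
    have hfun : (fun s => u (s, η, t)) = fun s =>
        -(β₁ (s, t) * β₂ (η, t)) / ((R (s, η, t) : ℝ) : ℂ) := funext fun s => hu (s, η, t)
    rw [hfun]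
    have h := ((hb1x ξ t).mul_const (β₂ (η, t))).neg.div
      ((hRx ξ η t).ofReal_comp) (hane (ξ, η, t))
    refine h.congr_deriv ?_
    simp only [Pi.neg_apply, Pi.pow_apply, Pi.mul_apply, Pi.add_apply, Pi.sub_apply]
    push_cast
    field_simp [hane (ξ, η, t)]
    ring
  have hu1 : ∀ ξ η t : ℝ, pdXi u (ξ, η, t)
      = -(DS.pd1' β₁ (ξ, t) * β₂ (η, t)) / ((R (ξ, η, t) : ℝ) : ℂ)
        + β₁ (ξ, t) * β₂ (η, t) * ((DS.Q β₁ (ξ, t) : ℝ) : ℂ)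
          / (2 * ((R (ξ, η, t) : ℝ) : ℂ) ^ 2) := fun ξ η t => (hux ξ η t).deriv
  have huxx : ∀ ξ η t : ℝ, HasDerivAt (fun s => pdXi u (s, η, t))
      (-(DS.pd1' (DS.pd1' β₁) (ξ, t) * β₂ (η, t)) / ((R (ξ, η, t) : ℝ) : ℂ)
        + DS.pd1' β₁ (ξ, t) * β₂ (η, t) * ((DS.Q β₁ (ξ, t) : ℝ) : ℂ)
          / ((R (ξ, η, t) : ℝ) : ℂ) ^ 2
        + β₁ (ξ, t) * β₂ (η, t) * ((DS.Qd β₁ (ξ, t) : ℝ) : ℂ)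
          / (2 * ((R (ξ, η, t) : ℝ) : ℂ) ^ 2)
        - β₁ (ξ, t) * β₂ (η, t) * ((DS.Q β₁ (ξ, t) : ℝ) : ℂ) ^ 2
          / (2 * ((R (ξ, η, t) : ℝ) : ℂ) ^ 3)) ξ := by
    intro ξ η t
    have hfun : (fun s => pdXi u (s, η, t)) = fun s =>
        -(DS.pd1' β₁ (s, t) * β₂ (η, t)) / ((R (s, η, t) : ℝ) : ℂ)
          + β₁ (s, t) * β₂ (η, t) * ((DS.Q β₁ (s, t) : ℝ) : ℂ)
            / (2 * ((R (s, η, t) : ℝ) : ℂ) ^ 2) := funext fun s => hu1 s η t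
    rw [hfun]
    have h1 := ((hA2x ξ t).mul_const (β₂ (η, t))).neg.div
      ((hRx ξ η t).ofReal_comp) (hane (ξ, η, t))
    have h2num := ((hb1x ξ t).mul_const (β₂ (η, t))).mul ((hqx ξ t).ofReal_comp)
    have h2den := ((DS.hasDerivAt_ofReal_pow 2 (hRx ξ η t)).const_mul (2 : ℂ))
    have hne2 : (2 : ℂ) * ((R (ξ, η, t) : ℝ) : ℂ) ^ 2 ≠ 0 :=
      mul_ne_zero two_ne_zero (pow_ne_zero 2 (hane (ξ, η, t)))
    have h := h1.add (h2num.div h2den hne2)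
    refine h.congr_deriv ?_
    simp only [Pi.neg_apply, Pi.pow_apply, Pi.mul_apply, Pi.add_apply, Pi.sub_apply]
    push_cast
    field_simp [hane (ξ, η, t)]
    ring
  -- η-derivatives of u
  have huy : ∀ ξ η t : ℝ, HasDerivAt (fun s => u (ξ, s, t))
      (-(β₁ (ξ, t) * DS.pd1' β₂ (η, t)) / ((R (ξ, η, t) : ℝ) : ℂ)
        + β₁ (ξ, t) * β₂ (η, t) * ((DS.Q β₂ (η, t) : ℝ) : ℂ)
          / (2 * ((R (ξ, η, t) : ℝ) : ℂ) ^ 2)) η := by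
    intro ξ η t
    have hfun : (fun s => u (ξ, s, t)) = fun s =>
        -(β₁ (ξ, t) * β₂ (s, t)) / ((R (ξ, s, t) : ℝ) : ℂ) := funext fun s => hu (ξ, s, t)
    rw [hfun]
    have h := ((hb2x η t).const_mul (β₁ (ξ, t))).neg.div
      ((hRy ξ η t).ofReal_comp) (hane (ξ, η, t))
    refine h.congr_deriv ?_
    simp only [Pi.neg_apply, Pi.pow_apply, Pi.mul_apply, Pi.add_apply, Pi.sub_apply]
    push_cast
    field_simp [hane (ξ, η, t)]
    ring
  have hu2 : ∀ ξ η t : ℝ, pdEta u (ξ, η, t)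
      = -(β₁ (ξ, t) * DS.pd1' β₂ (η, t)) / ((R (ξ, η, t) : ℝ) : ℂ)
        + β₁ (ξ, t) * β₂ (η, t) * ((DS.Q β₂ (η, t) : ℝ) : ℂ)
          / (2 * ((R (ξ, η, t) : ℝ) : ℂ) ^ 2) := fun ξ η t => (huy ξ η t).deriv
  have huyy : ∀ ξ η t : ℝ, HasDerivAt (fun s => pdEta u (ξ, s, t))
      (-(β₁ (ξ, t) * DS.pd1' (DS.pd1' β₂) (η, t)) / ((R (ξ, η, t) : ℝ) : ℂ)
        + β₁ (ξ, t) * DS.pd1' β₂ (η, t) * ((DS.Q β₂ (η, t) : ℝ) : ℂ)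
          / ((R (ξ, η, t) : ℝ) : ℂ) ^ 2
        + β₁ (ξ, t) * β₂ (η, t) * ((DS.Qd β₂ (η, t) : ℝ) : ℂ)
          / (2 * ((R (ξ, η, t) : ℝ) : ℂ) ^ 2)
        - β₁ (ξ, t) * β₂ (η, t) * ((DS.Q β₂ (η, t) : ℝ) : ℂ) ^ 2
          / (2 * ((R (ξ, η, t) : ℝ) : ℂ) ^ 3)) η := by
    intro ξ η t
    have hfun : (fun s => pdEta u (ξ, s, t)) = fun s =>
        -(β₁ (ξ, t) * DS.pd1' β₂ (s, t)) / ((R (ξ, s, t) : ℝ) : ℂ)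
          + β₁ (ξ, t) * β₂ (s, t) * ((DS.Q β₂ (s, t) : ℝ) : ℂ)
            / (2 * ((R (ξ, s, t) : ℝ) : ℂ) ^ 2) := funext fun s => hu2 ξ s t
    rw [hfun]
    have h1 := ((hB2x η t).const_mul (β₁ (ξ, t))).neg.div
      ((hRy ξ η t).ofReal_comp) (hane (ξ, η, t))
    have h2num := ((hb2x η t).const_mul (β₁ (ξ, t))).mul ((hrx η t).ofReal_comp)
    have h2den := ((DS.hasDerivAt_ofReal_pow 2 (hRy ξ η t)).const_mul (2 : ℂ))
    have hne2 : (2 : ℂ) * ((R (ξ, η, t) : ℝ) : ℂ) ^ 2 ≠ 0 :=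
      mul_ne_zero two_ne_zero (pow_ne_zero 2 (hane (ξ, η, t)))
    have h := h1.add (h2num.div h2den hne2)
    refine h.congr_deriv ?_
    simp only [Pi.neg_apply, Pi.pow_apply, Pi.mul_apply, Pi.add_apply, Pi.sub_apply]
    push_cast
    field_simp [hane (ξ, η, t)]
    ring
  -- t-derivative of u
  have hut : ∀ ξ η t : ℝ, HasDerivAt (fun s => u (ξ, η, s))
      (-(Complex.I * DS.pd1' (DS.pd1' β₁) (ξ, t) * β₂ (η, t)
          + β₁ (ξ, t) * (Complex.I * DS.pd1' (DS.pd1' β₂) (η, t))) / ((R (ξ, η, t) : ℝ) : ℂ)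
        - β₁ (ξ, t) * β₂ (η, t)
            * (((DS.Aim β₁ (ξ, t) : ℝ) : ℂ) + ((DS.Aim β₂ (η, t) : ℝ) : ℂ))
          / ((R (ξ, η, t) : ℝ) : ℂ) ^ 2) t := by
    intro ξ η t
    have hfun : (fun s => u (ξ, η, s)) = fun s =>
        -(β₁ (ξ, s) * β₂ (η, s)) / ((R (ξ, η, s) : ℝ) : ℂ) := funext fun s => hu (ξ, η, s)
    rw [hfun]
    have h := ((hb1t ξ t).mul (hb2t η t)).neg.div
      ((hRt ξ η t).ofReal_comp) (hane (ξ, η, t))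
    refine h.congr_deriv ?_
    simp only [Pi.neg_apply, Pi.pow_apply, Pi.mul_apply, Pi.add_apply, Pi.sub_apply]
    push_cast
    field_simp [hane (ξ, η, t)]
    ring

  -- η-derivative of v
  have hvy : ∀ ξ η t : ℝ, HasDerivAt (fun s => v (ξ, s, t))
      (DS.Qdd β₂ (η, t) / R (ξ, η, t)
        - (DS.Qd β₁ (ξ, t) + DS.Qd β₂ (η, t)) * DS.Q β₂ (η, t) / (2 * R (ξ, η, t) ^ 2)
        - DS.Q β₂ (η, t) * DS.Qd β₂ (η, t) / R (ξ, η, t) ^ 2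
        + (DS.Q β₁ (ξ, t) ^ 2 + DS.Q β₂ (η, t) ^ 2) * DS.Q β₂ (η, t)
          / (2 * R (ξ, η, t) ^ 3)) η := by
    intro ξ η t
    have hfun : (fun s => v (ξ, s, t)) = fun s =>
        (DS.Qd β₁ (ξ, t) + DS.Qd β₂ (s, t)) / R (ξ, s, t)
          - (DS.Q β₁ (ξ, t) ^ 2 + DS.Q β₂ (s, t) ^ 2) / (2 * R (ξ, s, t) ^ 2) :=
      funext fun s => hv' ξ s t
    rw [hfun]
    have hne2 : (2 : ℝ) * R (ξ, η, t) ^ 2 ≠ 0 :=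
      mul_ne_zero two_ne_zero (pow_ne_zero 2 (hRne (ξ, η, t)))
    have h1 := ((hr1x η t).const_add (DS.Qd β₁ (ξ, t))).div (hRy ξ η t) (hRne (ξ, η, t))
    have h2 := (((hrx η t).pow 2).const_add (DS.Q β₁ (ξ, t) ^ 2)).div
      (((hRy ξ η t).pow 2).const_mul (2 : ℝ)) hne2
    have h := h1.sub h2
    refine h.congr_deriv ?_
    simp only [Pi.neg_apply, Pi.pow_apply, Pi.mul_apply, Pi.add_apply, Pi.sub_apply]
    field_simp [hRne (ξ, η, t)]
    ring
  have hv2 : ∀ ξ η t : ℝ, pdEtaR v (ξ, η, t)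
      = DS.Qdd β₂ (η, t) / R (ξ, η, t)
        - (DS.Qd β₁ (ξ, t) + DS.Qd β₂ (η, t)) * DS.Q β₂ (η, t) / (2 * R (ξ, η, t) ^ 2)
        - DS.Q β₂ (η, t) * DS.Qd β₂ (η, t) / R (ξ, η, t) ^ 2
        + (DS.Q β₁ (ξ, t) ^ 2 + DS.Q β₂ (η, t) ^ 2) * DS.Q β₂ (η, t)
          / (2 * R (ξ, η, t) ^ 3) := fun ξ η t => (hvy ξ η t).deriv
  have hvyx : ∀ ξ η t : ℝ, HasDerivAt (fun s => pdEtaR v (s, η, t))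
      (- DS.Q β₁ (ξ, t) * DS.Qdd β₂ (η, t) / (2 * R (ξ, η, t) ^ 2)
        - DS.Qdd β₁ (ξ, t) * DS.Q β₂ (η, t) / (2 * R (ξ, η, t) ^ 2)
        + (DS.Qd β₁ (ξ, t) + DS.Qd β₂ (η, t)) * DS.Q β₁ (ξ, t) * DS.Q β₂ (η, t)
          / (2 * R (ξ, η, t) ^ 3)
        + DS.Q β₁ (ξ, t) * DS.Q β₂ (η, t) * DS.Qd β₂ (η, t) / R (ξ, η, t) ^ 3
        + DS.Q β₁ (ξ, t) * DS.Qd β₁ (ξ, t) * DS.Q β₂ (η, t) / R (ξ, η, t) ^ 3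
        - 3 * DS.Q β₁ (ξ, t) * DS.Q β₂ (η, t) * (DS.Q β₁ (ξ, t) ^ 2 + DS.Q β₂ (η, t) ^ 2)
          / (4 * R (ξ, η, t) ^ 4)) ξ := by
    intro ξ η t
    have hfun : (fun s => pdEtaR v (s, η, t)) = fun s =>
        DS.Qdd β₂ (η, t) / R (s, η, t)
          - (DS.Qd β₁ (s, t) + DS.Qd β₂ (η, t)) * DS.Q β₂ (η, t) / (2 * R (s, η, t) ^ 2)
          - DS.Q β₂ (η, t) * DS.Qd β₂ (η, t) / R (s, η, t) ^ 2
          + (DS.Q β₁ (s, t) ^ 2 + DS.Q β₂ (η, t) ^ 2) * DS.Q β₂ (η, t)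
            / (2 * R (s, η, t) ^ 3) := funext fun s => hv2 s η t
    rw [hfun]
    have hne2 : (2 : ℝ) * R (ξ, η, t) ^ 2 ≠ 0 :=
      mul_ne_zero two_ne_zero (pow_ne_zero 2 (hRne (ξ, η, t)))
    have hne3 : (2 : ℝ) * R (ξ, η, t) ^ 3 ≠ 0 :=
      mul_ne_zero two_ne_zero (pow_ne_zero 3 (hRne (ξ, η, t)))
    have h1 := (hasDerivAt_const ξ (DS.Qdd β₂ (η, t))).div (hRx ξ η t) (hRne (ξ, η, t))
    have h2 := (((hq1x ξ t).add_const (DS.Qd β₂ (η, t))).mul_const (DS.Q β₂ (η, t))).div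
      (((hRx ξ η t).pow 2).const_mul (2 : ℝ)) hne2
    have h3 := (hasDerivAt_const ξ (DS.Q β₂ (η, t) * DS.Qd β₂ (η, t))).div
      ((hRx ξ η t).pow 2) (pow_ne_zero 2 (hRne (ξ, η, t)))
    have h4 := ((((hqx ξ t).pow 2).add_const (DS.Q β₂ (η, t) ^ 2)).mul_const
      (DS.Q β₂ (η, t))).div (((hRx ξ η t).pow 3).const_mul (2 : ℝ)) hne3
    have h := ((h1.sub h2).sub h3).add h4
    refine h.congr_deriv ?_
    simp only [Pi.neg_apply, Pi.pow_apply, Pi.mul_apply, Pi.add_apply, Pi.sub_apply]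
    field_simp [hRne (ξ, η, t)]
    ring
  -- ξ-derivatives of |u|²
  have hwx : ∀ ξ η t : ℝ, HasDerivAt (fun s => ‖u (s, η, t)‖ ^ 2)
      (DS.Qd β₁ (ξ, t) * DS.Q β₂ (η, t) / R (ξ, η, t) ^ 2
        - DS.Q β₁ (ξ, t) ^ 2 * DS.Q β₂ (η, t) / R (ξ, η, t) ^ 3) ξ := by
    intro ξ η t
    have hfun : (fun s => ‖u (s, η, t)‖ ^ 2) = fun s =>
        DS.Q β₁ (s, t) * DS.Q β₂ (η, t) / R (s, η, t) ^ 2 := funext fun s => hw s η t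
    rw [hfun]
    have h := ((hqx ξ t).mul_const (DS.Q β₂ (η, t))).div
      ((hRx ξ η t).pow 2) (pow_ne_zero 2 (hRne (ξ, η, t)))
    refine h.congr_deriv ?_
    simp only [Pi.neg_apply, Pi.pow_apply, Pi.mul_apply, Pi.add_apply, Pi.sub_apply]
    field_simp [hRne (ξ, η, t)]
    ring
  have hw1 : ∀ ξ η t : ℝ, pdXiR (fun y => ‖u y‖ ^ 2) (ξ, η, t)
      = DS.Qd β₁ (ξ, t) * DS.Q β₂ (η, t) / R (ξ, η, t) ^ 2
        - DS.Q β₁ (ξ, t) ^ 2 * DS.Q β₂ (η, t) / R (ξ, η, t) ^ 3 :=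
    fun ξ η t => (hwx ξ η t).deriv
  have hwxx : ∀ ξ η t : ℝ, HasDerivAt
      (fun s => pdXiR (fun y => ‖u y‖ ^ 2) (s, η, t))
      (DS.Qdd β₁ (ξ, t) * DS.Q β₂ (η, t) / R (ξ, η, t) ^ 2
        - 3 * DS.Q β₁ (ξ, t) * DS.Qd β₁ (ξ, t) * DS.Q β₂ (η, t) / R (ξ, η, t) ^ 3
        + 3 * DS.Q β₁ (ξ, t) ^ 3 * DS.Q β₂ (η, t) / (2 * R (ξ, η, t) ^ 4)) ξ := by
    intro ξ η t
    have hfun : (fun s => pdXiR (fun y => ‖u y‖ ^ 2) (s, η, t)) = fun s =>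
        DS.Qd β₁ (s, t) * DS.Q β₂ (η, t) / R (s, η, t) ^ 2
          - DS.Q β₁ (s, t) ^ 2 * DS.Q β₂ (η, t) / R (s, η, t) ^ 3 :=
      funext fun s => hw1 s η t
    rw [hfun]
    have h1 := ((hq1x ξ t).mul_const (DS.Q β₂ (η, t))).div
      ((hRx ξ η t).pow 2) (pow_ne_zero 2 (hRne (ξ, η, t)))
    have h2 := (((hqx ξ t).pow 2).mul_const (DS.Q β₂ (η, t))).div
      ((hRx ξ η t).pow 3) (pow_ne_zero 3 (hRne (ξ, η, t)))
    have h := h1.sub h2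
    refine h.congr_deriv ?_
    simp only [Pi.neg_apply, Pi.pow_apply, Pi.mul_apply, Pi.add_apply, Pi.sub_apply]
    field_simp [hRne (ξ, η, t)]
    ring
  -- η-derivatives of |u|²
  have hwy : ∀ ξ η t : ℝ, HasDerivAt (fun s => ‖u (ξ, s, t)‖ ^ 2)
      (DS.Q β₁ (ξ, t) * DS.Qd β₂ (η, t) / R (ξ, η, t) ^ 2
        - DS.Q β₁ (ξ, t) * DS.Q β₂ (η, t) ^ 2 / R (ξ, η, t) ^ 3) η := by
    intro ξ η t
    have hfun : (fun s => ‖u (ξ, s, t)‖ ^ 2) = fun s =>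
        DS.Q β₁ (ξ, t) * DS.Q β₂ (s, t) / R (ξ, s, t) ^ 2 := funext fun s => hw ξ s t
    rw [hfun]
    have h := ((hrx η t).const_mul (DS.Q β₁ (ξ, t))).div
      ((hRy ξ η t).pow 2) (pow_ne_zero 2 (hRne (ξ, η, t)))
    refine h.congr_deriv ?_
    simp only [Pi.neg_apply, Pi.pow_apply, Pi.mul_apply, Pi.add_apply, Pi.sub_apply]
    field_simp [hRne (ξ, η, t)]
    ring
  have hw2 : ∀ ξ η t : ℝ, pdEtaR (fun y => ‖u y‖ ^ 2) (ξ, η, t)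
      = DS.Q β₁ (ξ, t) * DS.Qd β₂ (η, t) / R (ξ, η, t) ^ 2
        - DS.Q β₁ (ξ, t) * DS.Q β₂ (η, t) ^ 2 / R (ξ, η, t) ^ 3 :=
    fun ξ η t => (hwy ξ η t).deriv
  have hwyy : ∀ ξ η t : ℝ, HasDerivAt
      (fun s => pdEtaR (fun y => ‖u y‖ ^ 2) (ξ, s, t))
      (DS.Q β₁ (ξ, t) * DS.Qdd β₂ (η, t) / R (ξ, η, t) ^ 2
        - 3 * DS.Q β₁ (ξ, t) * DS.Q β₂ (η, t) * DS.Qd β₂ (η, t) / R (ξ, η, t) ^ 3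
        + 3 * DS.Q β₁ (ξ, t) * DS.Q β₂ (η, t) ^ 3 / (2 * R (ξ, η, t) ^ 4)) η := by
    intro ξ η t
    have hfun : (fun s => pdEtaR (fun y => ‖u y‖ ^ 2) (ξ, s, t)) = fun s =>
        DS.Q β₁ (ξ, t) * DS.Qd β₂ (s, t) / R (ξ, s, t) ^ 2
          - DS.Q β₁ (ξ, t) * DS.Q β₂ (s, t) ^ 2 / R (ξ, s, t) ^ 3 :=
      funext fun s => hw2 ξ s t
    rw [hfun]
    have h1 := ((hr1x η t).const_mul (DS.Q β₁ (ξ, t))).div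
      ((hRy ξ η t).pow 2) (pow_ne_zero 2 (hRne (ξ, η, t)))
    have h2 := (((hrx η t).pow 2).const_mul (DS.Q β₁ (ξ, t))).div
      ((hRy ξ η t).pow 3) (pow_ne_zero 3 (hRne (ξ, η, t)))
    have h := h1.sub h2
    refine h.congr_deriv ?_
    simp only [Pi.neg_apply, Pi.pow_apply, Pi.mul_apply, Pi.add_apply, Pi.sub_apply]
    field_simp [hRne (ξ, η, t)]
    ring
  refine ⟨?_, ?_⟩
  · rintro ⟨ξ, η, t⟩
    have e0 : pdT u (ξ, η, t)
        = -(Complex.I * DS.pd1' (DS.pd1' β₁) (ξ, t) * β₂ (η, t)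
            + β₁ (ξ, t) * (Complex.I * DS.pd1' (DS.pd1' β₂) (η, t))) / ((R (ξ, η, t) : ℝ) : ℂ)
          - β₁ (ξ, t) * β₂ (η, t)
              * (((DS.Aim β₁ (ξ, t) : ℝ) : ℂ) + ((DS.Aim β₂ (η, t) : ℝ) : ℂ))
            / ((R (ξ, η, t) : ℝ) : ℂ) ^ 2 := (hut ξ η t).deriv
    have e1 : pdXi (pdXi u) (ξ, η, t)
        = -(DS.pd1' (DS.pd1' β₁) (ξ, t) * β₂ (η, t)) / ((R (ξ, η, t) : ℝ) : ℂ)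
          + DS.pd1' β₁ (ξ, t) * β₂ (η, t) * ((DS.Q β₁ (ξ, t) : ℝ) : ℂ)
            / ((R (ξ, η, t) : ℝ) : ℂ) ^ 2
          + β₁ (ξ, t) * β₂ (η, t) * ((DS.Qd β₁ (ξ, t) : ℝ) : ℂ)
            / (2 * ((R (ξ, η, t) : ℝ) : ℂ) ^ 2)
          - β₁ (ξ, t) * β₂ (η, t) * ((DS.Q β₁ (ξ, t) : ℝ) : ℂ) ^ 2
            / (2 * ((R (ξ, η, t) : ℝ) : ℂ) ^ 3) := (huxx ξ η t).deriv
    have e2 : pdEta (pdEta u) (ξ, η, t)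
        = -(β₁ (ξ, t) * DS.pd1' (DS.pd1' β₂) (η, t)) / ((R (ξ, η, t) : ℝ) : ℂ)
          + β₁ (ξ, t) * DS.pd1' β₂ (η, t) * ((DS.Q β₂ (η, t) : ℝ) : ℂ)
            / ((R (ξ, η, t) : ℝ) : ℂ) ^ 2
          + β₁ (ξ, t) * β₂ (η, t) * ((DS.Qd β₂ (η, t) : ℝ) : ℂ)
            / (2 * ((R (ξ, η, t) : ℝ) : ℂ) ^ 2)
          - β₁ (ξ, t) * β₂ (η, t) * ((DS.Q β₂ (η, t) : ℝ) : ℂ) ^ 2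
            / (2 * ((R (ξ, η, t) : ℝ) : ℂ) ^ 3) := (huyy ξ η t).deriv
    have hup : u (ξ, η, t) = -(β₁ (ξ, t) * β₂ (η, t)) / ((R (ξ, η, t) : ℝ) : ℂ) :=
      hu (ξ, η, t)
    have hiut : Complex.I *
        (-(Complex.I * DS.pd1' (DS.pd1' β₁) (ξ, t) * β₂ (η, t)
            + β₁ (ξ, t) * (Complex.I * DS.pd1' (DS.pd1' β₂) (η, t))) / ((R (ξ, η, t) : ℝ) : ℂ)
          - β₁ (ξ, t) * β₂ (η, t)
              * (((DS.Aim β₁ (ξ, t) : ℝ) : ℂ) + ((DS.Aim β₂ (η, t) : ℝ) : ℂ))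
            / ((R (ξ, η, t) : ℝ) : ℂ) ^ 2)
        = (DS.pd1' (DS.pd1' β₁) (ξ, t) * β₂ (η, t)
            + β₁ (ξ, t) * DS.pd1' (DS.pd1' β₂) (η, t)) / ((R (ξ, η, t) : ℝ) : ℂ)
          - Complex.I * (β₁ (ξ, t) * β₂ (η, t)
              * (((DS.Aim β₁ (ξ, t) : ℝ) : ℂ) + ((DS.Aim β₂ (η, t) : ℝ) : ℂ)))
            / ((R (ξ, η, t) : ℝ) : ℂ) ^ 2 := by
      linear_combination (-((DS.pd1' (DS.pd1' β₁) (ξ, t) * β₂ (η, t)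
        + β₁ (ξ, t) * DS.pd1' (DS.pd1' β₂) (η, t)) / ((R (ξ, η, t) : ℝ) : ℂ)))
        * Complex.I_mul_I
    rw [e0, e1, e2, hup, hv' ξ η t, hiut]
    push_cast
    simp only [DS.cast_Q, DS.cast_Qd, DS.cast_Aim]
    linear_combination (β₁ (ξ, t) * β₂ (η, t) *
      ((DS.pd1' β₁ (ξ, t) * (starRingEnd ℂ) (β₁ (ξ, t))
          - (starRingEnd ℂ) (DS.pd1' β₁ (ξ, t)) * β₁ (ξ, t))
        + (DS.pd1' β₂ (η, t) * (starRingEnd ℂ) (β₂ (η, t))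
          - (starRingEnd ℂ) (DS.pd1' β₂ (η, t)) * β₂ (η, t)))
      / (2 * ((R (ξ, η, t) : ℝ) : ℂ) ^ 2)) * Complex.I_mul_I
  · rintro ⟨ξ, η, t⟩
    have e1 : pdXiR (pdEtaR v) (ξ, η, t)
        = - DS.Q β₁ (ξ, t) * DS.Qdd β₂ (η, t) / (2 * R (ξ, η, t) ^ 2)
          - DS.Qdd β₁ (ξ, t) * DS.Q β₂ (η, t) / (2 * R (ξ, η, t) ^ 2)
          + (DS.Qd β₁ (ξ, t) + DS.Qd β₂ (η, t)) * DS.Q β₁ (ξ, t) * DS.Q β₂ (η, t)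
            / (2 * R (ξ, η, t) ^ 3)
          + DS.Q β₁ (ξ, t) * DS.Q β₂ (η, t) * DS.Qd β₂ (η, t) / R (ξ, η, t) ^ 3
          + DS.Q β₁ (ξ, t) * DS.Qd β₁ (ξ, t) * DS.Q β₂ (η, t) / R (ξ, η, t) ^ 3
          - 3 * DS.Q β₁ (ξ, t) * DS.Q β₂ (η, t) * (DS.Q β₁ (ξ, t) ^ 2 + DS.Q β₂ (η, t) ^ 2)
            / (4 * R (ξ, η, t) ^ 4) := (hvyx ξ η t).deriv
    have e2 : pdXiR (pdXiR (fun s => ‖u s‖ ^ 2)) (ξ, η, t)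
        = DS.Qdd β₁ (ξ, t) * DS.Q β₂ (η, t) / R (ξ, η, t) ^ 2
          - 3 * DS.Q β₁ (ξ, t) * DS.Qd β₁ (ξ, t) * DS.Q β₂ (η, t) / R (ξ, η, t) ^ 3
          + 3 * DS.Q β₁ (ξ, t) ^ 3 * DS.Q β₂ (η, t) / (2 * R (ξ, η, t) ^ 4) :=
      (hwxx ξ η t).deriv
    have e3 : pdEtaR (pdEtaR (fun s => ‖u s‖ ^ 2)) (ξ, η, t)
        = DS.Q β₁ (ξ, t) * DS.Qdd β₂ (η, t) / R (ξ, η, t) ^ 2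
          - 3 * DS.Q β₁ (ξ, t) * DS.Q β₂ (η, t) * DS.Qd β₂ (η, t) / R (ξ, η, t) ^ 3
          + 3 * DS.Q β₁ (ξ, t) * DS.Q β₂ (η, t) ^ 3 / (2 * R (ξ, η, t) ^ 4) :=
      (hwyy ξ η t).deriv
    rw [e1, e2, e3]
    ring
end

section
/- Let q̂₁, q̂₂, g₁, g₂ : ℝ³ → ℂ be smooth functions of (ξ,η,t) satisfying the coupled system i·q̂₁,t + q̂₁,ξξ + q̂₁,ηη + q̂₁·(g₁+g₂) = 0, −i·q̂₂,t + q̂₂,ξξ + q̂₂,ηη + q̂₂·(g₁+g₂) = 0, ∂g₁/∂ξ = −(1/2)·∂(q̂₁q̂₂)/∂η, ∂g₂/∂η = −(1/2)·∂(q̂₁q̂₂)/∂ξ. Let ψ, φ : ℝ³ → ℂ be smooth functions satisfying the spatial Lax equations ψ_ξ = −(1/2)·q̂₁·φ and φ_η = −(1/2)·q̂₂·ψ. Define the error functions F := i·ψ_t − ψ_{ξξ} + ψ_{ηη} + g₁·ψ − q̂₁,ξ·φ and G := i·φ_t − φ_{ξξ} + φ_{ηη} − g₂·φ + q̂₂,η·ψ.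 Then F and G satisfy the same spatial Lax equations: F_ξ = −(1/2)·q̂₁·G and G_η = −(1/2)·q̂₂·F. -/
namespace Lax17Aux

/-- Directional derivative. -/
noncomputable def D (v : ℝ × ℝ × ℝ) (f : ℝ × ℝ × ℝ → ℂ) (p : ℝ × ℝ × ℝ) : ℂ :=
  fderiv ℝ f p v

def e₁ : ℝ × ℝ × ℝ := (1, 0, 0)
def e₂ : ℝ × ℝ × ℝ := (0, 1, 0)
def e₃ : ℝ × ℝ × ℝ := (0, 0, 1)

lemma pdXi_eq {f : ℝ × ℝ × ℝ → ℂ} (hf : Differentiable ℝ f) : pdXi f = D e₁ f := by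
  funext p
  have hL : HasDerivAt (fun s : ℝ => ((s, p.2.1, p.2.2) : ℝ × ℝ × ℝ)) e₁ p.1 :=
    (hasDerivAt_id p.1).prodMk (hasDerivAt_const p.1 (p.2.1, p.2.2))
  have h := (hf p).hasFDerivAt.comp_hasDerivAt p.1 hL
  simpa [pdXi, D, Function.comp_def] using h.deriv

lemma pdEta_eq {f : ℝ × ℝ × ℝ → ℂ} (hf : Differentiable ℝ f) : pdEta f = D e₂ f := by
  funext p
  have hL : HasDerivAt (fun s : ℝ => ((p.1, s, p.2.2) : ℝ × ℝ × ℝ)) e₂ p.2.1 :=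
    (hasDerivAt_const p.2.1 p.1).prodMk ((hasDerivAt_id p.2.1).prodMk (hasDerivAt_const p.2.1 p.2.2))
  have h := (hf p).hasFDerivAt.comp_hasDerivAt p.2.1 hL
  simpa [pdEta, D, Function.comp_def] using h.deriv

lemma pdT_eq {f : ℝ × ℝ × ℝ → ℂ} (hf : Differentiable ℝ f) : pdT f = D e₃ f := by
  funext p
  have hL : HasDerivAt (fun s : ℝ => ((p.1, p.2.1, s) : ℝ × ℝ × ℝ)) e₃ p.2.2 :=
    (hasDerivAt_const p.2.2 p.1).prodMk ((hasDerivAt_const p.2.2 p.2.1).prodMk (hasDerivAt_id p.2.2))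
  have h := (hf p).hasFDerivAt.comp_hasDerivAt p.2.2 hL
  simpa [pdT, D, Function.comp_def] using h.deriv

lemma D_contDiff {f : ℝ × ℝ × ℝ → ℂ} (hf : ContDiff ℝ (⊤ : ℕ∞) f) (v : ℝ × ℝ × ℝ) :
    ContDiff ℝ (⊤ : ℕ∞) (D v f) :=
  (ContinuousLinearMap.apply ℝ ℂ v).contDiff.comp (hf.fderiv_right (m := (⊤ : ℕ∞)) (by exact_mod_cast le_top))

lemma D_diff {f : ℝ × ℝ × ℝ → ℂ} (hf : ContDiff ℝ (⊤ : ℕ∞) f) (v : ℝ × ℝ × ℝ) :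
    Differentiable ℝ (D v f) :=
  (D_contDiff hf v).differentiable (by simp)

lemma hfd {f : ℝ × ℝ × ℝ → ℂ} (hf : ContDiff ℝ (⊤ : ℕ∞) f) (p : ℝ × ℝ × ℝ) :
    HasFDerivAt f (fderiv ℝ f p) p :=
  ((hf.differentiable (by simp)) p).hasFDerivAt

lemma D_swap {f : ℝ × ℝ × ℝ → ℂ} (hf : ContDiff ℝ (⊤ : ℕ∞) f) (v w p : ℝ × ℝ × ℝ) :
    D v (D w f) p = fderiv ℝ (fderiv ℝ f) p v w := by
  have h2 : DifferentiableAt ℝ (fderiv ℝ f) p :=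
    ((hf.fderiv_right (m := (⊤ : ℕ∞)) (by exact_mod_cast le_top)).differentiable (by simp)) p
  have H := (ContinuousLinearMap.apply ℝ ℂ w).hasFDerivAt.comp p h2.hasFDerivAt
  have hfun : D w f = (ContinuousLinearMap.apply ℝ ℂ w) ∘ (fderiv ℝ f) := rfl
  rw [D, hfun, H.fderiv]
  simp

lemma D_comm {f : ℝ × ℝ × ℝ → ℂ} (hf : ContDiff ℝ (⊤ : ℕ∞) f) (v w : ℝ × ℝ × ℝ) :
    D v (D w f) = D w (D v f) := by
  funext p
  rw [D_swap hf v w p, D_swap hf w v p]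
  have h1 : ∀ y, HasFDerivAt f (fderiv ℝ f y) y := fun y => hfd hf y
  have h2 : HasFDerivAt (fderiv ℝ f) (fderiv ℝ (fderiv ℝ f) p) p :=
    (((hf.fderiv_right (m := (⊤ : ℕ∞)) (by exact_mod_cast le_top)).differentiable (by simp)) p).hasFDerivAt
  exact second_derivative_symmetric h1 h2 v w

lemma D_mul {f g : ℝ × ℝ × ℝ → ℂ} (hf : ContDiff ℝ (⊤ : ℕ∞) f) (hg : ContDiff ℝ (⊤ : ℕ∞) g)
    (v p : ℝ × ℝ × ℝ) :
    D v (fun q => f q * g q) p = D v f p * g p + f p * D v g p := by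
  have H := (hfd hf p).mul (hfd hg p)
  unfold D
  rw [show fderiv ℝ (fun q => f q * g q) p = _ from H.fderiv]
  simp only [ContinuousLinearMap.add_apply, ContinuousLinearMap.smul_apply, smul_eq_mul]
  ring

lemma D_cmul_mul {f g : ℝ × ℝ × ℝ → ℂ} (hf : ContDiff ℝ (⊤ : ℕ∞) f)
    (hg : ContDiff ℝ (⊤ : ℕ∞) g) (c : ℂ) (v p : ℝ × ℝ × ℝ) :
    D v (fun q => c * (f q * g q)) p = c * (D v f p * g p + f p * D v g p) := by
  have H := ((hfd hf p).mul (hfd hg p)).const_mul c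
  unfold D
  rw [show fderiv ℝ (fun q => c * (f q * g q)) p = _ from H.fderiv]
  simp only [ContinuousLinearMap.add_apply, ContinuousLinearMap.smul_apply, smul_eq_mul]
  ring

lemma D_cmul_mul_fun {f g : ℝ × ℝ × ℝ → ℂ} (hf : ContDiff ℝ (⊤ : ℕ∞) f)
    (hg : ContDiff ℝ (⊤ : ℕ∞) g) (c : ℂ) (v : ℝ × ℝ × ℝ) :
    D v (fun q => c * (f q * g q)) = fun p => c * (D v f p * g p + f p * D v g p) := by
  funext p
  exact D_cmul_mul hf hg c v p

lemma D_cmul_addmul {f1 f2 f3 f4 : ℝ × ℝ × ℝ → ℂ} (h1 : ContDiff ℝ (⊤ : ℕ∞) f1)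
    (h2 : ContDiff ℝ (⊤ : ℕ∞) f2) (h3 : ContDiff ℝ (⊤ : ℕ∞) f3)
    (h4 : ContDiff ℝ (⊤ : ℕ∞) f4) (c : ℂ) (v p : ℝ × ℝ × ℝ) :
    D v (fun q => c * (f1 q * f2 q + f3 q * f4 q)) p
      = c * (D v f1 p * f2 p + f1 p * D v f2 p + D v f3 p * f4 p + f3 p * D v f4 p) := by
  have H := (((hfd h1 p).mul (hfd h2 p)).add ((hfd h3 p).mul (hfd h4 p))).const_mul c
  unfold D
  rw [show fderiv ℝ (fun q => c * (f1 q * f2 q + f3 q * f4 q)) p = _ from H.fderiv]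
  simp only [ContinuousLinearMap.add_apply, ContinuousLinearMap.smul_apply, smul_eq_mul]
  ring

lemma D_big {f1 f2 f3 f4 f5 f6 f7 : ℝ × ℝ × ℝ → ℂ} (c d : ℂ)
    (h1 : ContDiff ℝ (⊤ : ℕ∞) f1) (h2 : ContDiff ℝ (⊤ : ℕ∞) f2)
    (h3 : ContDiff ℝ (⊤ : ℕ∞) f3) (h4 : ContDiff ℝ (⊤ : ℕ∞) f4)
    (h5 : ContDiff ℝ (⊤ : ℕ∞) f5) (h6 : ContDiff ℝ (⊤ : ℕ∞) f6)
    (h7 : ContDiff ℝ (⊤ : ℕ∞) f7) (v p : ℝ × ℝ × ℝ) :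
    D v (fun q => Complex.I * f1 q - f2 q + f3 q + c * (f4 q * f5 q) + d * (f6 q * f7 q)) p
      = Complex.I * D v f1 p - D v f2 p + D v f3 p
        + c * (D v f4 p * f5 p + f4 p * D v f5 p)
        + d * (D v f6 p * f7 p + f6 p * D v f7 p) := by
  have H := (((((hfd h1 p).const_mul Complex.I).sub (hfd h2 p)).add (hfd h3 p)).add
      (((hfd h4 p).mul (hfd h5 p)).const_mul c)).add (((hfd h6 p).mul (hfd h7 p)).const_mul d)
  unfold D
  rw [show fderiv ℝ (fun q => Complex.I * f1 q - f2 q + f3 q + c * (f4 q * f5 q) + d * (f6 q * f7 q)) p = _ from H.fderiv]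
  simp only [ContinuousLinearMap.add_apply, ContinuousLinearMap.sub_apply,
    ContinuousLinearMap.smul_apply, smul_eq_mul]
  ring

end Lax17Aux

open Lax17Aux in
/-- Compatibility of the Lax pair of the coupled system: the
error functions of the time evolution satisfy the same spatial Lax equations. -/
theorem lax_pair_compatibility
    (Qh₁ Qh₂ g₁ g₂ : ℝ × ℝ × ℝ → ℂ)
    (hQh₁s : ContDiff ℝ (⊤ : ℕ∞) Qh₁) (hQh₂s : ContDiff ℝ (⊤ : ℕ∞) Qh₂)
    (hg₁s : ContDiff ℝ (⊤ : ℕ∞) g₁) (hg₂s : ContDiff ℝ (⊤ : ℕ∞) g₂)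
    (heq₁ : ∀ p, Complex.I * pdT Qh₁ p + pdXi (pdXi Qh₁) p + pdEta (pdEta Qh₁) p
      + Qh₁ p * (g₁ p + g₂ p) = 0)
    (heq₂ : ∀ p, -Complex.I * pdT Qh₂ p + pdXi (pdXi Qh₂) p + pdEta (pdEta Qh₂) p
      + Qh₂ p * (g₁ p + g₂ p) = 0)
    (heq₃ : ∀ p, pdXi g₁ p = -(1 / 2) * pdEta (fun s => Qh₁ s * Qh₂ s) p)
    (heq₄ : ∀ p, pdEta g₂ p = -(1 / 2) * pdXi (fun s => Qh₁ s * Qh₂ s) p)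
    (ψ φ : ℝ × ℝ × ℝ → ℂ)
    (hψs : ContDiff ℝ (⊤ : ℕ∞) ψ) (hφs : ContDiff ℝ (⊤ : ℕ∞) φ)
    (hψξ : ∀ p, pdXi ψ p = -(1 / 2) * Qh₁ p * φ p)
    (hφη : ∀ p, pdEta φ p = -(1 / 2) * Qh₂ p * ψ p)
    (F G : ℝ × ℝ × ℝ → ℂ)
    (hF : ∀ p, F p = Complex.I * pdT ψ p - pdXi (pdXi ψ) p + pdEta (pdEta ψ) p
      + g₁ p * ψ p - pdXi Qh₁ p * φ p)
    (hG : ∀ p, G p = Complex.I * pdT φ p - pdXi (pdXi φ) p + pdEta (pdEta φ) p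
      - g₂ p * φ p + pdEta Qh₂ p * ψ p) :
    (∀ p, pdXi F p = -(1 / 2) * Qh₁ p * G p) ∧
    (∀ p, pdEta G p = -(1 / 2) * Qh₂ p * F p) := by
  have hψd := hψs.differentiable (by simp)
  have hφd := hφs.differentiable (by simp)
  have hQ1d := hQh₁s.differentiable (by simp)
  have hQ2d := hQh₂s.differentiable (by simp)
  have hg1d := hg₁s.differentiable (by simp)
  have hg2d := hg₂s.differentiable (by simp)
  -- hypotheses in D form
  have hA : D e₁ ψ = fun q => (-(1 / 2) : ℂ) * (Qh₁ q * φ q) := by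
    rw [← pdXi_eq hψd]; funext q; rw [hψξ q]; ring
  have hB : D e₂ φ = fun q => (-(1 / 2) : ℂ) * (Qh₂ q * ψ q) := by
    rw [← pdEta_eq hφd]; funext q; rw [hφη q]; ring
  have heq₁' : ∀ p, Complex.I * D e₃ Qh₁ p + D e₁ (D e₁ Qh₁) p + D e₂ (D e₂ Qh₁) p
      + Qh₁ p * (g₁ p + g₂ p) = 0 := by
    intro p; have h := heq₁ p
    rw [pdT_eq hQ1d, pdXi_eq hQ1d, pdXi_eq (D_diff hQh₁s e₁), pdEta_eq hQ1d,
      pdEta_eq (D_diff hQh₁s e₂)] at h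
    exact h
  have heq₂' : ∀ p, -Complex.I * D e₃ Qh₂ p + D e₁ (D e₁ Qh₂) p + D e₂ (D e₂ Qh₂) p
      + Qh₂ p * (g₁ p + g₂ p) = 0 := by
    intro p; have h := heq₂ p
    rw [pdT_eq hQ2d, pdXi_eq hQ2d, pdXi_eq (D_diff hQh₂s e₁), pdEta_eq hQ2d,
      pdEta_eq (D_diff hQh₂s e₂)] at h
    exact h
  have heq₃' : ∀ p, D e₁ g₁ p
      = -(1 / 2) * (D e₂ Qh₁ p * Qh₂ p + Qh₁ p * D e₂ Qh₂ p) := by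
    intro p; have h := heq₃ p
    rw [pdXi_eq hg1d, pdEta_eq ((hQh₁s.mul hQh₂s).differentiable (by simp)),
      D_mul hQh₁s hQh₂s e₂ p] at h
    exact h
  have heq₄' : ∀ p, D e₂ g₂ p
      = -(1 / 2) * (D e₁ Qh₁ p * Qh₂ p + Qh₁ p * D e₁ Qh₂ p) := by
    intro p; have h := heq₄ p
    rw [pdEta_eq hg2d, pdXi_eq ((hQh₁s.mul hQh₂s).differentiable (by simp)),
      D_mul hQh₁s hQh₂s e₁ p] at h
    exact h
  have hF' : F = fun q => Complex.I * D e₃ ψ q - D e₁ (D e₁ ψ) q + D e₂ (D e₂ ψ) q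
      + (1 : ℂ) * (g₁ q * ψ q) + (-1 : ℂ) * (D e₁ Qh₁ q * φ q) := by
    funext q
    rw [hF q, pdT_eq hψd, pdXi_eq hψd, pdXi_eq (D_diff hψs e₁), pdEta_eq hψd,
      pdEta_eq (D_diff hψs e₂), pdXi_eq hQ1d]
    ring
  have hG' : G = fun q => Complex.I * D e₃ φ q - D e₁ (D e₁ φ) q + D e₂ (D e₂ φ) q
      + (-1 : ℂ) * (g₂ q * φ q) + (1 : ℂ) * (D e₂ Qh₂ q * ψ q) := by
    funext q
    rw [hG q, pdT_eq hφd, pdXi_eq hφd, pdXi_eq (D_diff hφs e₁), pdEta_eq hφd,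
      pdEta_eq (D_diff hφs e₂), pdEta_eq hQ2d]
    ring
  have hFd : Differentiable ℝ F := by
    rw [hF']
    exact (((((contDiff_const.mul (D_contDiff hψs e₃)).sub
      (D_contDiff (D_contDiff hψs e₁) e₁)).add
      (D_contDiff (D_contDiff hψs e₂) e₂)).add
      (contDiff_const.mul (hg₁s.mul hψs))).add
      (contDiff_const.mul ((D_contDiff hQh₁s e₁).mul hφs))).differentiable (by simp)
  have hGd : Differentiable ℝ G := by
    rw [hG']
    exact (((((contDiff_const.mul (D_contDiff hφs e₃)).sub
      (D_contDiff (D_contDiff hφs e₁) e₁)).add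
      (D_contDiff (D_contDiff hφs e₂) e₂)).add
      (contDiff_const.mul (hg₂s.mul hφs))).add
      (contDiff_const.mul ((D_contDiff hQh₂s e₂).mul hψs))).differentiable (by simp)
  constructor
  · intro p
    rw [pdXi_eq hFd, hF']
    simp only [hG']
    rw [D_big (1 : ℂ) (-1 : ℂ) (D_contDiff hψs e₃) (D_contDiff (D_contDiff hψs e₁) e₁)
      (D_contDiff (D_contDiff hψs e₂) e₂) hg₁s hψs (D_contDiff hQh₁s e₁) hφs e₁ p]
    rw [D_comm hψs e₁ e₃]
    rw [D_comm (D_contDiff hψs e₂) e₁ e₂, D_comm hψs e₁ e₂]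
    simp only [hA]
    rw [D_cmul_mul_fun hQh₁s hφs (-(1 / 2) : ℂ) e₁,
        D_cmul_mul_fun hQh₁s hφs (-(1 / 2) : ℂ) e₂]
    rw [D_cmul_mul hQh₁s hφs (-(1 / 2) : ℂ) e₃ p]
    rw [D_cmul_addmul (D_contDiff hQh₁s e₁) hφs hQh₁s (D_contDiff hφs e₁)
      (-(1 / 2) : ℂ) e₁ p]
    rw [D_cmul_addmul (D_contDiff hQh₁s e₂) hφs hQh₁s (D_contDiff hφs e₂)
      (-(1 / 2) : ℂ) e₂ p]
    simp only [hB]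
    rw [D_cmul_mul hQh₂s hψs (-(1 / 2) : ℂ) e₂ p]
    linear_combination ((-(1 / 2) : ℂ) * φ p) * heq₁' p + ψ p * heq₃' p
  · intro p
    rw [pdEta_eq hGd, hG']
    simp only [hF']
    rw [D_big (-1 : ℂ) (1 : ℂ) (D_contDiff hφs e₃) (D_contDiff (D_contDiff hφs e₁) e₁)
      (D_contDiff (D_contDiff hφs e₂) e₂) hg₂s hφs (D_contDiff hQh₂s e₂) hψs e₂ p]
    rw [D_comm hφs e₂ e₃]
    rw [D_comm (D_contDiff hφs e₁) e₂ e₁, D_comm hφs e₂ e₁]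
    simp only [hB]
    rw [D_cmul_mul_fun hQh₂s hψs (-(1 / 2) : ℂ) e₁,
        D_cmul_mul_fun hQh₂s hψs (-(1 / 2) : ℂ) e₂]
    rw [D_cmul_mul hQh₂s hψs (-(1 / 2) : ℂ) e₃ p]
    rw [D_cmul_addmul (D_contDiff hQh₂s e₁) hψs hQh₂s (D_contDiff hψs e₁)
      (-(1 / 2) : ℂ) e₁ p]
    rw [D_cmul_addmul (D_contDiff hQh₂s e₂) hψs hQh₂s (D_contDiff hψs e₂)
      (-(1 / 2) : ℂ) e₂ p]
    simp only [hA]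
    rw [D_cmul_mul hQh₁s hφs (-(1 / 2) : ℂ) e₁ p]
    linear_combination (((1 / 2) : ℂ) * ψ p) * heq₂' p + (-(φ p)) * heq₄' p
end
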